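/- arXiv:2506.10809 — 6 statements merged into one kernel-verified Lean document; each statement's English description precedes it below -/
import Mathlib

section
/- Let K be a real number and let f be a C² function on an open interval I ⊆ ℝ with f ≥ 0 on I and f''(t) + K f(t) ≤ 0 for all t ∈ I. If f(t₀) = 0 for some t₀ ∈ I, then f is identically 0 on I. -/
/-!
A zero `t₁` of `f ≥ 0` is a minimum, so `f'(t₁) = 0` as well. Let `M` be the maximum of `f` on a
closed ball of radius `r` around `t₁`; there `f'' ≤ -K f ≤ |K| M`, so the second-order Taylor
bound at `t₁` gives `M ≤ |K| M r² / 2`, which forces `M = 0` once `|K| r² < 2`. Hence the zero set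
of `f` is open in `I`; it is also closed, and `I` is connected.
-/

open Set Filter Topology Metric

theorem ConvexOn.isMinOn_of_hasDerivAt_eq_zero {S : Set ℝ} {f : ℝ → ℝ} {x : ℝ}
    (hf : ConvexOn ℝ S f) (hx : x ∈ S) (hd : HasDerivAt f 0 x) : IsMinOn f S x := by
  rw [isMinOn_iff]
  intro y hy
  rcases lt_trichotomy x y with hxy | rfl | hyx
  · have := hf.le_slope_of_hasDerivAt hx hy hxy hd
    rw [slope_def_field, le_div_iff₀ (sub_pos.2 hxy)] at this
    linarith
  · exact le_rfl
  · have := hf.slope_le_of_hasDerivAt hy hx hyx hd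
    rw [slope_def_field, div_le_iff₀ (sub_pos.2 hyx)] at this
    linarith

theorem le_taylor_of_hasDerivAt2_le {f f' f'' : ℝ → ℝ} {S : Set ℝ} {B x₀ x : ℝ}
    (hS : Convex ℝ S) (hf : ∀ y ∈ S, HasDerivAt f (f' y) y)
    (hf' : ∀ y ∈ S, HasDerivAt f' (f'' y) y) (hB : ∀ y ∈ S, f'' y ≤ B)
    (hx₀ : x₀ ∈ S) (hx : x ∈ S) :
    f x ≤ f x₀ + f' x₀ * (x - x₀) + B / 2 * (x - x₀) ^ 2 := by
  set g : ℝ → ℝ := fun y => f x₀ + f' x₀ * (y - x₀) + B / 2 * (y - x₀) ^ 2 - f y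
  have hg : ∀ y ∈ S, HasDerivAt g (f' x₀ + B * (y - x₀) - f' y) y := fun y hy =>
    (((((hasDerivAt_id' y).sub_const x₀).const_mul (f' x₀)).const_add (f x₀)).add
      ((((hasDerivAt_id' y).sub_const x₀).pow 2).const_mul (B / 2)) |>.sub (hf y hy)).congr_deriv
      (by norm_num; ring)
  have hg' : ∀ y ∈ S, HasDerivAt (fun y => f' x₀ + B * (y - x₀) - f' y) (B - f'' y) y :=
    fun y hy => (((((hasDerivAt_id' y).sub_const x₀).const_mul B).const_add (f' x₀)).sub
      (hf' y hy)).congr_deriv (by ring)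
  have hconvex : ConvexOn ℝ S g :=
    convexOn_of_hasDerivWithinAt2_nonneg hS
      (fun y hy => (hg y hy).continuousAt.continuousWithinAt)
      (fun y hy => (hg y (interior_subset hy)).hasDerivWithinAt)
      (fun y hy => (hg' y (interior_subset hy)).hasDerivWithinAt)
      (fun y hy => sub_nonneg.2 (hB y (interior_subset hy)))
  have hmin := isMinOn_iff.1
    (hconvex.isMinOn_of_hasDerivAt_eq_zero hx₀ (by simpa using hg x₀ hx₀)) x hx
  simp only [g, sub_self] at hmin
  linarith

theorem eventually_eq_zero_of_hasDerivAt2_le_mul {f f' f'' : ℝ → ℝ} {U : Set ℝ} {C t₁ : ℝ}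
    (hU : IsOpen U) (hf : ∀ t ∈ U, HasDerivAt f (f' t) t)
    (hf' : ∀ t ∈ U, HasDerivAt f' (f'' t) t) (hnonneg : ∀ t ∈ U, 0 ≤ f t)
    (hineq : ∀ t ∈ U, f'' t ≤ C * f t) (ht₁ : t₁ ∈ U) (hzero : f t₁ = 0) :
    ∀ᶠ t in 𝓝 t₁, f t = 0 := by
  have hderiv : f' t₁ = 0 := by
    refine IsLocalMin.hasDerivAt_eq_zero ?_ (hf t₁ ht₁)
    filter_upwards [hU.mem_nhds ht₁] with t ht
    exact hzero ▸ hnonneg t ht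
  have hsmall : ∀ᶠ t in 𝓝 t₁, |C| * (t - t₁) ^ 2 < 2 :=
    ContinuousAt.eventually_lt (by fun_prop) continuousAt_const (by simp)
  obtain ⟨ε, hε, hball⟩ :=
    nhds_basis_closedBall.mem_iff.1 (inter_mem (hU.mem_nhds ht₁) hsmall)
  obtain ⟨c, hc, hmax⟩ := isCompact_closedBall t₁ ε |>.exists_isMaxOn
    (nonempty_closedBall.2 hε.le)
    fun t ht => (hf t (hball ht).1).continuousAt.continuousWithinAt
  set M := f c
  have hM : 0 ≤ M := hnonneg c (hball hc).1
  have hf''_le : ∀ t ∈ closedBall t₁ ε, f'' t ≤ |C| * M := fun t ht =>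
    calc f'' t ≤ C * f t := hineq t (hball ht).1
      _ ≤ |C| * f t := mul_le_mul_of_nonneg_right (le_abs_self C) (hnonneg t (hball ht).1)
      _ ≤ |C| * M := mul_le_mul_of_nonneg_left (isMaxOn_iff.1 hmax t ht) (abs_nonneg C)
  have htaylor := le_taylor_of_hasDerivAt2_le (convex_closedBall t₁ ε)
    (fun t ht => hf t (hball ht).1) (fun t ht => hf' t (hball ht).1) hf''_le
    (mem_closedBall_self hε.le) hc
  rw [hzero, hderiv] at htaylor
  have hc_small : |C| * (c - t₁) ^ 2 < 2 := (hball hc).2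
  have hM0 : M ≤ 0 := by nlinarith
  filter_upwards [closedBall_mem_nhds t₁ hε] with t ht
  exact le_antisymm ((isMaxOn_iff.1 hmax t ht).trans hM0) (hnonneg t (hball ht).1)

/-- **Maximum principle for `f'' + K f ≤ 0`.**
If `f` is a `C²` function on an open interval `I ⊆ ℝ` with `f ≥ 0` on `I` and
`f'' + K f ≤ 0` on `I`, and `f` vanishes at some point of `I`, then `f ≡ 0` on `I`. -/
theorem statement_0 (K : ℝ) (I : Set ℝ) (hI : IsOpen I) (hIconv : Convex ℝ I)
    (f : ℝ → ℝ) (hf : ContDiffOn ℝ 2 f I)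
    (hnonneg : ∀ t ∈ I, 0 ≤ f t)
    (hineq : ∀ t ∈ I, deriv (deriv f) t + K * f t ≤ 0)
    (t₀ : ℝ) (ht₀ : t₀ ∈ I) (hzero : f t₀ = 0) :
    ∀ t ∈ I, f t = 0 := by
  have hd1 : DifferentiableOn ℝ f I := hf.differentiableOn (by norm_num)
  have hd2 : DifferentiableOn ℝ (deriv f) I :=
    (hf.deriv_of_isOpen (m := 1) hI (by norm_num)).differentiableOn one_ne_zero
  have hlocal : ∀ t ∈ I, f t = 0 → ∀ᶠ s in 𝓝 t, f s = 0 := fun t ht =>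
    eventually_eq_zero_of_hasDerivAt2_le_mul (C := -K) hI
      (fun s hs => (hd1.differentiableAt (hI.mem_nhds hs)).hasDerivAt)
      (fun s hs => (hd2.differentiableAt (hI.mem_nhds hs)).hasDerivAt) hnonneg
      (fun s hs => by linarith [hineq s hs]) ht
  have : PreconnectedSpace I := Subtype.preconnectedSpace hIconv.isPreconnected
  have hclopen : IsClopen {t : I | f t = 0} := by
    refine ⟨isClosed_eq hd1.continuousOn.domRestrict continuous_const, ?_⟩
    refine isOpen_iff_mem_nhds.2 fun t ht => ?_
    exact continuous_subtype_val.continuousAt.preimage_mem_nhds (hlocal t t.2 ht)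
  have hzeros := hclopen.eq_univ ⟨⟨t₀, ht₀⟩, hzero⟩
  exact fun t ht => hzeros.symm.subset (mem_univ (⟨t, ht⟩ : I))
end

section
/- Let K > 0, let a > 0, and let f: [0,a] → ℝ be a C² function with f ≥ 0 on [0,a], f''(t) + K f(t) ≤ 0 for all t ∈ [0,a], and f not identically 0. Then f'(t)² + K f(t)² > 0 for every t ∈ [0,a]. -/
/-- For `K > 0`, a nontrivial nonnegative `C²` solution of `f'' + K f ≤ 0` on a compact
interval `[0,a]` satisfies `(f')² + K f² > 0` everywhere on `[0,a]`. -/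
theorem statement_2 (K a : ℝ) (hK : 0 < K) (ha : 0 < a)
    (f f' f'' : ℝ → ℝ)
    (hf' : ∀ t ∈ Set.Icc 0 a, HasDerivWithinAt f (f' t) (Set.Icc 0 a) t)
    (hf'' : ∀ t ∈ Set.Icc 0 a, HasDerivWithinAt f' (f'' t) (Set.Icc 0 a) t)
    (hf''cont : ContinuousOn f'' (Set.Icc 0 a))
    (hnonneg : ∀ t ∈ Set.Icc 0 a, 0 ≤ f t)
    (hineq : ∀ t ∈ Set.Icc 0 a, f'' t + K * f t ≤ 0)
    (hnontriv : ∃ t ∈ Set.Icc 0 a, f t ≠ 0) :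
    ∀ t ∈ Set.Icc 0 a, 0 < f' t ^ 2 + K * f t ^ 2 := by
  intro t0 ht0
  by_contra h
  push_neg at h
  have h1 : f' t0 ^ 2 + K * f t0 ^ 2 = 0 := by
    have := sq_nonneg (f' t0)
    have := mul_nonneg hK.le (sq_nonneg (f t0))
    linarith
  have hf'0 : f' t0 = 0 := by
    have h2 : f' t0 ^ 2 = 0 := by nlinarith [sq_nonneg (f' t0), sq_nonneg (f t0)]
    exact pow_eq_zero_iff (by norm_num) |>.mp h2
  have hf0 : f t0 = 0 := by
    have h2 : f t0 ^ 2 = 0 := by nlinarith [sq_nonneg (f' t0), sq_nonneg (f t0)]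
    exact pow_eq_zero_iff (by norm_num) |>.mp h2
  -- f' is antitone on [0,a] since f'' ≤ 0
  have hcontf : ContinuousOn f (Set.Icc 0 a) := fun x hx => (hf' x hx).continuousWithinAt
  have hcontf' : ContinuousOn f' (Set.Icc 0 a) := fun x hx => (hf'' x hx).continuousWithinAt
  have hanti : AntitoneOn f' (Set.Icc 0 a) := by
    apply antitoneOn_of_hasDerivWithinAt_nonpos (convex_Icc 0 a) hcontf'
    · intro x hx
      exact (hf'' x (interior_subset hx)).mono interior_subset
    · intro x hx
      have hx' := interior_subset hx
      have := hineq x hx'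
      have := mul_nonneg hK.le (hnonneg x hx')
      linarith
  -- f ≤ 0 everywhere on [0,a]
  have key : ∀ t ∈ Set.Icc 0 a, f t ≤ 0 := by
    intro t ht
    rcases le_total t t0 with hle | hle
    · -- f monotone on [0, t0]
      have hsub : Set.Icc (0:ℝ) t0 ⊆ Set.Icc 0 a :=
        Set.Icc_subset_Icc le_rfl ht0.2
      have hmono : MonotoneOn f (Set.Icc 0 t0) := by
        apply monotoneOn_of_hasDerivWithinAt_nonneg (convex_Icc 0 t0) (hcontf.mono hsub)
        · intro x hx
          exact (hf' x (hsub (interior_subset hx))).mono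
            ((interior_subset : interior (Set.Icc (0:ℝ) t0) ⊆ _).trans hsub)
        · intro x hx
          have hx' := interior_subset hx
          have := hanti (hsub hx') ht0 hx'.2
          rw [hf'0] at this
          linarith
      have := hmono ⟨ht.1, hle⟩ ⟨ht0.1, le_rfl⟩ hle
      linarith [hf0 ▸ this]
    · -- f antitone on [t0, a]
      have hsub : Set.Icc t0 a ⊆ Set.Icc 0 a :=
        Set.Icc_subset_Icc ht0.1 le_rfl
      have hmono : AntitoneOn f (Set.Icc t0 a) := by
        apply antitoneOn_of_hasDerivWithinAt_nonpos (convex_Icc t0 a) (hcontf.mono hsub)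
        · intro x hx
          exact (hf' x (hsub (interior_subset hx))).mono
            ((interior_subset : interior (Set.Icc t0 a) ⊆ _).trans hsub)
        · intro x hx
          have hx' := interior_subset hx
          have := hanti ht0 (hsub hx') hx'.1
          rw [hf'0] at this
          linarith
      have := hmono ⟨le_rfl, ht0.2⟩ ⟨hle, ht.2⟩ hle
      linarith [hf0 ▸ this]
  obtain ⟨s, hs, hsne⟩ := hnontriv
  exact hsne (le_antisymm (key s hs) (hnonneg s hs))
end

section
/- Let K ∈ ℝ, a > 0, and let f: [0,a] → ℝ be C² with f ≥ 0, f not identically 0, and f''(t) + K f(t) ≤ 0 for all t ∈ [0,a]. Assume f(0) = 0, and assume that either f(a) = 0 or f'(a) ≥ 0. Then the zero set f⁻¹({0}) is contained in {0, a}, and sup over t ∈ f⁻¹({0}) of f'(t)² equals the maximum over t ∈ [0,a] of f'(t)² + K f(t)², and this common value is strictly positive. -/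
/-!
A nonnegative `f` with `f'' + K f ≤ 0` that vanishes together with `f'` at one point vanishes
identically: with `c = |K| + 1` we get `f'' ≤ c² f`, and Grönwall applied first to `f' - c f`
and then to `f` gives `f ≤ 0` to the right of that point (and, by reflection, to the left).
Hence `f' ≠ 0` at the zeros of a nontrivial `f`; since an interior zero would be a minimum,
the zeros lie at the endpoints.

The energy `E = f'² + K f²` has `E' = 2 f' (f'' + K f)`, so it decreases where `f` increases
and increases where `f` decreases. If `E(t) > 0` and `f'(t) > 0`, then `f' > 0` on `[0, t]`:
at a last zero `s` of `f'` before `t` we would have `K f(s)² = E(s) ≥ E(t) > K f(t)²` with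
`0 ≤ f(s) ≤ f(t)`, which is impossible. So `E(t) ≤ E(0)`; symmetrically `f'(t) < 0` gives
`E(t) ≤ E(a)` and `f'(a) < 0`, whence `f(a) = 0` by the boundary condition. If `f'(t) = 0`,
then `K f(t)² > 0` forces `K > 0`, so `f'` is antitone and again `E(t) ≤ E(0)`. Applied at a
maximum point of `E`, this shows the maximum is attained on the zero set of `f`, where `E = f'²`.
-/

open Set

section Interval

variable {g g' : ℝ → ℝ} {p q s t : ℝ}

theorem monotoneOn_of_hasDerivWithinAt_Icc
    (hg : ∀ x ∈ Icc p q, HasDerivWithinAt g (g' x) (Icc p q) x) (hst : Icc s t ⊆ Icc p q)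
    (h : ∀ x ∈ Ioo s t, 0 ≤ g' x) : MonotoneOn g (Icc s t) := by
  refine monotoneOn_of_hasDerivWithinAt_nonneg (convex_Icc s t)
    (fun x hx => (hg x (hst hx)).continuousWithinAt.mono hst) (fun x hx => ?_) (by simpa using h)
  rw [interior_Icc] at hx ⊢
  exact (hg x (hst (Ioo_subset_Icc_self hx))).mono (Ioo_subset_Icc_self.trans hst)

theorem antitoneOn_of_hasDerivWithinAt_Icc
    (hg : ∀ x ∈ Icc p q, HasDerivWithinAt g (g' x) (Icc p q) x) (hst : Icc s t ⊆ Icc p q)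
    (h : ∀ x ∈ Ioo s t, g' x ≤ 0) : AntitoneOn g (Icc s t) := by
  refine antitoneOn_of_hasDerivWithinAt_nonpos (convex_Icc s t)
    (fun x hx => (hg x (hst hx)).continuousWithinAt.mono hst) (fun x hx => ?_) (by simpa using h)
  rw [interior_Icc] at hx ⊢
  exact (hg x (hst (Ioo_subset_Icc_self hx))).mono (Ioo_subset_Icc_self.trans hst)

theorem nonpos_of_hasDerivWithinAt_le_mul {c : ℝ}
    (hg : ∀ x ∈ Icc p q, HasDerivWithinAt g (g' x) (Icc p q) x) (hp : g p ≤ 0)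
    (hle : ∀ x ∈ Icc p q, g' x ≤ c * g x) : ∀ x ∈ Icc p q, g x ≤ 0 := by
  intro x hx
  have := le_gronwallBound_of_liminf_deriv_right_le (δ := 0) (ε := 0)
    (fun y hy => (hg y hy).continuousWithinAt)
    (fun y hy r hr => ((hg y (Ico_subset_Icc_self hy)).mono_of_mem_nhdsWithin
      (Icc_mem_nhdsGE_of_mem hy)).liminf_right_slope_le hr)
    hp (fun y hy => by simpa using hle y (Ico_subset_Icc_self hy)) x hx
  rwa [gronwallBound_ε0_δ0] at this

theorem exists_zero_forall_pos_Ioc (hg : ContinuousOn g (Icc s t)) (ht : 0 < g t)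
    (h : ∃ u ∈ Icc s t, g u ≤ 0) : ∃ r ∈ Icc s t, g r = 0 ∧ ∀ v ∈ Ioc r t, 0 < g v := by
  have hcl : IsClosed (Icc s t ∩ g ⁻¹' Iic 0) :=
    hg.preimage_isClosed_of_isClosed isClosed_Icc isClosed_Iic
  obtain ⟨r, ⟨hr, hgr⟩, hlast⟩ :=
    (isCompact_Icc.of_isClosed_subset hcl inter_subset_left).exists_isGreatest h
  have hlast' : ∀ v ∈ Icc r t, g v ≤ 0 → v ≤ r := fun v hv hgv =>
    hlast ⟨⟨hr.1.trans hv.1, hv.2⟩, hgv⟩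
  obtain ⟨w, hw, hgw⟩ := intermediate_value_Icc hr.2 (hg.mono (Icc_subset_Icc_left hr.1))
    ⟨hgr, ht.le⟩
  obtain rfl : w = r := le_antisymm (hlast' w hw hgw.le) hw.1
  exact ⟨w, hr, hgw, fun v hv => lt_of_not_ge fun hgv =>
    hv.1.not_ge (hlast' v (Ioc_subset_Icc_self hv) hgv)⟩

end Interval

/-- The paper's nonnegative `fK`-concave functions on `[0, a]`: `f'' + K f ≤ 0`, where `f'`
and `f''` are one-sided derivatives at the endpoints. -/
structure IsNonnegKConcave (K a : ℝ) (f f' f'' : ℝ → ℝ) : Prop where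
  hasDerivWithinAt : ∀ t ∈ Icc 0 a, HasDerivWithinAt f (f' t) (Icc 0 a) t
  hasDerivWithinAt_deriv : ∀ t ∈ Icc 0 a, HasDerivWithinAt f' (f'' t) (Icc 0 a) t
  nonneg : ∀ t ∈ Icc 0 a, 0 ≤ f t
  deriv2_add_mul_nonpos : ∀ t ∈ Icc 0 a, f'' t + K * f t ≤ 0

def energy (K : ℝ) (f f' : ℝ → ℝ) (t : ℝ) : ℝ := f' t ^ 2 + K * f t ^ 2

theorem energy_reflect (K a : ℝ) (f f' : ℝ → ℝ) (t : ℝ) :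
    energy K (fun t => f (a - t)) (fun t => -f' (a - t)) t = energy K f f' (a - t) := by
  simp [energy]

namespace IsNonnegKConcave

variable {K a s t t₀ : ℝ} {f f' f'' : ℝ → ℝ}

theorem reflect (hf : IsNonnegKConcave K a f f' f'') :
    IsNonnegKConcave K a (fun t => f (a - t)) (fun t => -f' (a - t)) (fun t => f'' (a - t)) := by
  have hmem : MapsTo (fun t => a - t) (Icc 0 a) (Icc 0 a) := fun t ht =>
    ⟨by linarith [ht.2], by linarith [ht.1]⟩
  have hlin : ∀ t, HasDerivWithinAt (fun t => a - t) (-1) (Icc 0 a) t := fun t =>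
    (hasDerivWithinAt_id t _).const_sub a
  refine ⟨fun t ht => ?_, fun t ht => ?_, fun t ht => hf.nonneg _ (hmem ht),
    fun t ht => hf.deriv2_add_mul_nonpos _ (hmem ht)⟩
  · simpa [Function.comp_def] using (hf.hasDerivWithinAt _ (hmem ht)).comp t (hlin t) hmem
  · simpa [Function.comp_def] using
      ((hf.hasDerivWithinAt_deriv _ (hmem ht)).comp t (hlin t) hmem).fun_neg

theorem continuousOn_deriv (hf : IsNonnegKConcave K a f f' f'') : ContinuousOn f' (Icc 0 a) :=
  fun t ht => (hf.hasDerivWithinAt_deriv t ht).continuousWithinAt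

theorem hasDerivWithinAt_energy (hf : IsNonnegKConcave K a f f' f'') (ht : t ∈ Icc 0 a) :
    HasDerivWithinAt (energy K f f') (2 * f' t * (f'' t + K * f t)) (Icc 0 a) t := by
  refine (((hf.hasDerivWithinAt_deriv t ht).fun_pow 2).fun_add
    (((hf.hasDerivWithinAt t ht).fun_pow 2).const_mul K)).congr_deriv ?_
  push_cast
  ring

theorem continuousOn_energy (hf : IsNonnegKConcave K a f f' f'') :
    ContinuousOn (energy K f f') (Icc 0 a) :=
  fun _ ht => (hf.hasDerivWithinAt_energy ht).continuousWithinAt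

theorem energy_antitoneOn (hf : IsNonnegKConcave K a f f' f'') (hst : Icc s t ⊆ Icc 0 a)
    (h : ∀ x ∈ Ioo s t, 0 ≤ f' x) : AntitoneOn (energy K f f') (Icc s t) :=
  antitoneOn_of_hasDerivWithinAt_Icc (fun _ hx => hf.hasDerivWithinAt_energy hx) hst
    fun x hx => mul_nonpos_of_nonneg_of_nonpos (by linarith [h x hx])
      (hf.deriv2_add_mul_nonpos x (hst (Ioo_subset_Icc_self hx)))

theorem eq_zero_of_le_of_deriv_eq_zero (hf : IsNonnegKConcave K a f f' f'')
    (ht₀ : t₀ ∈ Icc 0 a) (h0 : f t₀ = 0) (h0' : f' t₀ = 0) : ∀ t ∈ Icc t₀ a, f t = 0 := by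
  set c := |K| + 1
  have hsub : Icc t₀ a ⊆ Icc 0 a := Icc_subset_Icc_left ht₀.1
  have hd : ∀ x ∈ Icc t₀ a, HasDerivWithinAt f (f' x) (Icc t₀ a) x := fun x hx =>
    (hf.hasDerivWithinAt x (hsub hx)).mono hsub
  have hd' : ∀ x ∈ Icc t₀ a, HasDerivWithinAt f' (f'' x) (Icc t₀ a) x := fun x hx =>
    (hf.hasDerivWithinAt_deriv x (hsub hx)).mono hsub
  have hc : 0 ≤ c ^ 2 + K := by nlinarith [neg_abs_le K, abs_nonneg K]
  have hslope : ∀ x ∈ Icc t₀ a, f' x - c * f x ≤ 0 := by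
    refine nonpos_of_hasDerivWithinAt_le_mul (c := -c)
      (fun x hx => (hd' x hx).sub ((hd x hx).const_mul c)) (by simp [h0, h0']) fun x hx => ?_
    nlinarith [hf.deriv2_add_mul_nonpos x (hsub hx), mul_nonneg hc (hf.nonneg x (hsub hx))]
  intro t ht
  refine le_antisymm ?_ (hf.nonneg t (hsub ht))
  exact nonpos_of_hasDerivWithinAt_le_mul (c := c) hd h0.le (fun x hx => by linarith [hslope x hx]) t ht

theorem eq_zero_of_deriv_eq_zero (hf : IsNonnegKConcave K a f f' f'')
    (ht₀ : t₀ ∈ Icc 0 a) (h0 : f t₀ = 0) (h0' : f' t₀ = 0) : ∀ t ∈ Icc 0 a, f t = 0 := by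
  intro t ht
  rcases le_total t₀ t with h | h
  · exact hf.eq_zero_of_le_of_deriv_eq_zero ht₀ h0 h0' t ⟨h, ht.2⟩
  · simpa using hf.reflect.eq_zero_of_le_of_deriv_eq_zero (t₀ := a - t₀)
      ⟨by linarith [ht₀.2], by linarith [ht₀.1]⟩ (by simpa using h0) (by simpa using h0')
      (a - t) ⟨by linarith, by linarith [ht.1]⟩

theorem deriv_ne_zero_of_eq_zero (hf : IsNonnegKConcave K a f f' f'')
    (hne : ∃ t ∈ Icc 0 a, f t ≠ 0) (ht : t ∈ Icc 0 a) (h0 : f t = 0) : f' t ≠ 0 := fun h0' =>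
  let ⟨u, hu, hfu⟩ := hne
  hfu (hf.eq_zero_of_deriv_eq_zero ht h0 h0' u hu)

theorem eq_zero_or_eq_of_eq_zero (hf : IsNonnegKConcave K a f f' f'')
    (hne : ∃ t ∈ Icc 0 a, f t ≠ 0) (ht : t ∈ Icc 0 a) (h0 : f t = 0) : t = 0 ∨ t = a := by
  by_contra! hint
  have hnhds : Icc 0 a ∈ nhds t :=
    Icc_mem_nhds (lt_of_le_of_ne ht.1 hint.1.symm) (lt_of_le_of_ne ht.2 hint.2)
  have hmin : IsLocalMin f t :=
    Filter.mem_of_superset hnhds fun u hu => h0 ▸ hf.nonneg u hu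
  exact hf.deriv_ne_zero_of_eq_zero hne ht h0
    (hmin.hasDerivAt_eq_zero ((hf.hasDerivWithinAt t ht).hasDerivAt hnhds))

theorem deriv_pos_of_energy_pos (hf : IsNonnegKConcave K a f f' f'') (ht : t ∈ Icc 0 a)
    (hpos : 0 < f' t) (hE : 0 < energy K f f' t) : ∀ u ∈ Icc 0 t, 0 < f' u := by
  have hsub : Icc 0 t ⊆ Icc 0 a := Icc_subset_Icc_right ht.2
  by_contra! hneg
  obtain ⟨s, hs, hs0, hpos'⟩ :=
    exists_zero_forall_pos_Ioc (hf.continuousOn_deriv.mono hsub) hpos hneg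
  have hst : Icc s t ⊆ Icc 0 a := (Icc_subset_Icc_left hs.1).trans hsub
  have hsmem : s ∈ Icc s t := left_mem_Icc.2 hs.2
  have htmem : t ∈ Icc s t := right_mem_Icc.2 hs.2
  have hE_le : energy K f f' t ≤ energy K f f' s :=
    hf.energy_antitoneOn hst (fun x hx => (hpos' x (Ioo_subset_Ioc_self hx)).le) hsmem htmem hs.2
  have hf_le : f s ≤ f t := monotoneOn_of_hasDerivWithinAt_Icc hf.hasDerivWithinAt hst
    (fun x hx => (hpos' x (Ioo_subset_Ioc_self hx)).le) hsmem htmem hs.2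
  have hfs := hf.nonneg s (hst hsmem)
  simp only [energy, hs0] at hE hE_le
  rcases le_or_gt K 0 with hK | hK
  · nlinarith [mul_nonpos_of_nonpos_of_nonneg hK (sq_nonneg (f s))]
  · nlinarith [mul_le_mul_of_nonneg_left (pow_le_pow_left₀ hfs hf_le 2) hK.le]

theorem energy_le_energy_zero (hf : IsNonnegKConcave K a f f' f'') (ht : t ∈ Icc 0 a)
    (hpos : 0 < f' t) (hE : 0 < energy K f f' t) :
    0 < f' 0 ∧ energy K f f' t ≤ energy K f f' 0 := by
  have h := hf.deriv_pos_of_energy_pos ht hpos hE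
  exact ⟨h 0 (left_mem_Icc.2 ht.1), hf.energy_antitoneOn (Icc_subset_Icc_right ht.2)
    (fun x hx => (h x (Ioo_subset_Icc_self hx)).le) (left_mem_Icc.2 ht.1)
    (right_mem_Icc.2 ht.1) ht.1⟩

theorem energy_le_energy_right (hf : IsNonnegKConcave K a f f' f'') (ht : t ∈ Icc 0 a)
    (hneg : f' t < 0) (hE : 0 < energy K f f' t) :
    f' a < 0 ∧ energy K f f' t ≤ energy K f f' a := by
  have := hf.reflect.energy_le_energy_zero (t := a - t)
    ⟨by linarith [ht.2], by linarith [ht.1]⟩ (by simpa using hneg)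
    (by rwa [energy_reflect, sub_sub_cancel])
  simpa [energy_reflect] using this

theorem exists_eq_zero_energy_le (hf : IsNonnegKConcave K a f f' f'') (ha : 0 ≤ a)
    (h0 : f 0 = 0) (hbdry : f a = 0 ∨ 0 ≤ f' a) (ht : t ∈ Icc 0 a)
    (hE : 0 < energy K f f' t) :
    ∃ z ∈ Icc 0 a, f z = 0 ∧ energy K f f' t ≤ energy K f f' z := by
  rcases lt_trichotomy (f' t) 0 with hneg | hcrit | hpos
  · obtain ⟨ha', hle⟩ := hf.energy_le_energy_right ht hneg hE
    exact ⟨a, right_mem_Icc.2 ha, hbdry.resolve_right ha'.not_ge, hle⟩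
  · have hK : 0 < K := by
      simp only [energy, hcrit] at hE
      nlinarith [sq_nonneg (f t)]
    have hanti : AntitoneOn f' (Icc 0 a) :=
      antitoneOn_of_hasDerivWithinAt_Icc hf.hasDerivWithinAt_deriv subset_rfl fun x hx => by
        nlinarith [hf.deriv2_add_mul_nonpos x (Ioo_subset_Icc_self hx),
          hf.nonneg x (Ioo_subset_Icc_self hx)]
    refine ⟨0, left_mem_Icc.2 ha, h0, hf.energy_antitoneOn (Icc_subset_Icc_right ht.2)
      (fun x hx => hcrit ▸ hanti ⟨hx.1.le, hx.2.le.trans ht.2⟩ ht hx.2.le)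
      (left_mem_Icc.2 ht.1) (right_mem_Icc.2 ht.1) ht.1⟩
  · exact ⟨0, left_mem_Icc.2 ha, h0, (hf.energy_le_energy_zero ht hpos hE).2⟩

end IsNonnegKConcave

theorem statement_3_general (K a : ℝ) (ha : 0 < a)
    (f f' f'' : ℝ → ℝ)
    (hf' : ∀ t ∈ Set.Icc 0 a, HasDerivWithinAt f (f' t) (Set.Icc 0 a) t)
    (hf'' : ∀ t ∈ Set.Icc 0 a, HasDerivWithinAt f' (f'' t) (Set.Icc 0 a) t)
    (hnonneg : ∀ t ∈ Set.Icc 0 a, 0 ≤ f t)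
    (hnontriv : ∃ t ∈ Set.Icc 0 a, f t ≠ 0)
    (hineq : ∀ t ∈ Set.Icc 0 a, f'' t + K * f t ≤ 0)
    (h0 : f 0 = 0)
    (hbdry : f a = 0 ∨ 0 ≤ f' a) :
    (∀ t ∈ Set.Icc 0 a, f t = 0 → t = 0 ∨ t = a) ∧
    ∃ M : ℝ, 0 < M ∧
      IsGreatest ((fun t => f' t ^ 2 + K * f t ^ 2) '' Set.Icc 0 a) M ∧
      sSup ((fun t => f' t ^ 2) '' {t | t ∈ Set.Icc 0 a ∧ f t = 0}) = M := by
  have hf : IsNonnegKConcave K a f f' f'' := ⟨hf', hf'', hnonneg, hineq⟩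
  have h0mem : (0 : ℝ) ∈ Icc 0 a := left_mem_Icc.2 ha.le
  obtain ⟨t₀, ht₀, hmax⟩ :=
    isCompact_Icc.exists_isMaxOn (nonempty_Icc.2 ha.le) hf.continuousOn_energy
  have hM : 0 < energy K f f' t₀ := by
    refine lt_of_lt_of_le ?_ (hmax h0mem)
    have := hf.deriv_ne_zero_of_eq_zero hnontriv h0mem h0
    rw [energy, h0, zero_pow two_ne_zero, mul_zero, add_zero]
    positivity
  obtain ⟨z, hz, hfz, hle⟩ := hf.exists_eq_zero_energy_le ha.le h0 hbdry ht₀ hM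
  have hsq_eq_energy : ∀ u, f u = 0 → f' u ^ 2 = energy K f f' u := fun u hu => by
    simp [energy, hu]
  refine ⟨fun t ht => hf.eq_zero_or_eq_of_eq_zero hnontriv ht, energy K f f' t₀, hM,
    ⟨mem_image_of_mem _ ht₀, forall_mem_image.2 hmax⟩, IsGreatest.csSup_eq ⟨⟨z, ⟨hz, hfz⟩, ?_⟩, ?_⟩⟩
  · exact (hsq_eq_energy z hfz).trans (le_antisymm (hmax hz) hle)
  · rintro _ ⟨u, ⟨hu, hfu⟩, rfl⟩
    exact (hsq_eq_energy u hfu).trans_le (hmax hu)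

/-- For a nontrivial nonnegative `C²` solution of `f'' + K f ≤ 0` on `[0,a]` with `f(0) = 0`
and either `f(a) = 0` or `f'(a) ≥ 0` (sub-Neumann boundary condition), the zero set of `f`
is contained in `{0, a}` and `sup_{f⁻¹(0)} (f')²` equals `max_{[0,a]} ((f')² + K f²)`,
this common value being strictly positive. -/
theorem statement_3 (K a : ℝ) (ha : 0 < a)
    (f f' f'' : ℝ → ℝ)
    (hf' : ∀ t ∈ Set.Icc 0 a, HasDerivWithinAt f (f' t) (Set.Icc 0 a) t)
    (hf'' : ∀ t ∈ Set.Icc 0 a, HasDerivWithinAt f' (f'' t) (Set.Icc 0 a) t)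
    (hf''cont : ContinuousOn f'' (Set.Icc 0 a))
    (hnonneg : ∀ t ∈ Set.Icc 0 a, 0 ≤ f t)
    (hnontriv : ∃ t ∈ Set.Icc 0 a, f t ≠ 0)
    (hineq : ∀ t ∈ Set.Icc 0 a, f'' t + K * f t ≤ 0)
    (h0 : f 0 = 0)
    (hbdry : f a = 0 ∨ 0 ≤ f' a) :
    (∀ t ∈ Set.Icc 0 a, f t = 0 → t = 0 ∨ t = a) ∧
    ∃ M : ℝ, 0 < M ∧
      IsGreatest ((fun t => f' t ^ 2 + K * f t ^ 2) '' Set.Icc 0 a) M ∧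
      sSup ((fun t => f' t ^ 2) '' {t | t ∈ Set.Icc 0 a ∧ f t = 0}) = M :=
  statement_3_general K a ha f f' f'' hf' hf'' hnonneg hnontriv hineq h0 hbdry
end

section
/- Let K > 0 and let f: [a,b] → ℝ be a Lipschitz function with f ≥ 0 and (b−a)·√K < π. Then the following are equivalent: (i) f satisfies f'' + K f ≤ 0 in the distributional sense on (a,b); (ii) for all t₀, t₁ ∈ [a,b] with t₀ ≠ t₁ and all s ∈ [0,1], f((1−s)t₀ + s t₁) ≥ (sin((1−s)√K·|t₁−t₀|)/sin(√K·|t₁−t₀|))·f(t₀) + (sin(s√K·|t₁−t₀|)/sin(√K·|t₁−t₀|))·f(t₁). -/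
/-!
Write `ω = √K`. For `p < t < q` the σ-inequality, cleared of the positive denominator
`sin (ω (q - p))`, is the three-point inequality
`sin (ω (q - t)) f p + sin (ω (t - p)) f q ≤ sin (ω (q - p)) f t`.

If it holds, taking `p, q = x ∓ h` gives `f (x - h) + f (x + h) ≤ 2 cos (ω h) f x`. Pairing with a
test function `φ ≥ 0` and moving the translations onto `φ` gives
`∫ f (φ (x + h) + φ (x - h) - 2 cos (ω h) φ x) ≤ 0`; dividing by `h²` and letting `h → 0` gives
`∫ f (φ'' + ω² φ) ≤ 0`.

Conversely, let `G ≥ 0` be the Green function of `d²/dy² + ω²` on `[p, q]` with pole at `t`, so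
that `G'' + ω² G = ω (sin (ω (q - t)) δ_p + sin (ω (t - p)) δ_q - sin (ω (q - p)) δ_t)`; its sign
is where `ω (b - a) < π` enters. Testing the distributional inequality against mollifications of `G` and
letting the mollifier shrink gives the three-point inequality at interior points, and continuity
extends it to `[a, b]`.
-/

open Real Set Filter Topology MeasureTheory

def SigmaConcaveOn (ω : ℝ) (s : Set ℝ) (F : ℝ → ℝ) : Prop :=
  ∀ t₀ ∈ s, ∀ t₁ ∈ s, t₀ ≠ t₁ → ∀ u ∈ Icc (0 : ℝ) 1,
    sin ((1 - u) * (ω * |t₁ - t₀|)) / sin (ω * |t₁ - t₀|) * F t₀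
      + sin (u * (ω * |t₁ - t₀|)) / sin (ω * |t₁ - t₀|) * F t₁ ≤ F ((1 - u) * t₀ + u * t₁)

def SinConcaveOn (ω : ℝ) (s : Set ℝ) (F : ℝ → ℝ) : Prop :=
  ∀ ⦃p⦄, p ∈ s → ∀ ⦃q⦄, q ∈ s → ∀ ⦃t⦄, p < t → t < q →
    sin (ω * (q - t)) * F p + sin (ω * (t - p)) * F q ≤ sin (ω * (q - p)) * F t

def DistribSupersolutionOn (K : ℝ) (U : Set ℝ) (F : ℝ → ℝ) : Prop :=
  ∀ φ : ℝ → ℝ, ContDiff ℝ (⊤ : ℕ∞) φ → HasCompactSupport φ → tsupport φ ⊆ U →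
    (∀ t, 0 ≤ φ t) → ∫ t in U, F t * (deriv (deriv φ) t + K * φ t) ≤ 0

theorem SinConcaveOn.mono {ω : ℝ} {s s' : Set ℝ} {F : ℝ → ℝ} (h : SinConcaveOn ω s' F)
    (hss' : s ⊆ s') : SinConcaveOn ω s F :=
  fun _ hp _ hq => h (hss' hp) (hss' hq)

theorem sigmaConcaveOn_congr {ω : ℝ} {s : Set ℝ} {F G : ℝ → ℝ} (hs : Convex ℝ s)
    (h : EqOn F G s) : SigmaConcaveOn ω s F ↔ SigmaConcaveOn ω s G := by
  have key : ∀ {F G : ℝ → ℝ}, EqOn F G s → SigmaConcaveOn ω s F → SigmaConcaveOn ω s G := by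
    intro F G h hF t₀ h₀ t₁ h₁ hne u hu
    have hmem : (1 - u) * t₀ + u * t₁ ∈ s := by
      simpa only [smul_eq_mul] using hs h₀ h₁ (by linarith [hu.2]) hu.1 (by ring)
    rw [← h h₀, ← h h₁, ← h hmem]
    exact hF t₀ h₀ t₁ h₁ hne u hu
  exact ⟨key h, key h.symm⟩

theorem distribSupersolutionOn_congr {K : ℝ} {U : Set ℝ} {F G : ℝ → ℝ} (hU : MeasurableSet U)
    (h : EqOn F G U) : DistribSupersolutionOn K U F ↔ DistribSupersolutionOn K U G := by
  have key : ∀ φ : ℝ → ℝ, ∫ t in U, F t * (deriv (deriv φ) t + K * φ t)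
      = ∫ t in U, G t * (deriv (deriv φ) t + K * φ t) := fun φ =>
    setIntegral_congr_fun hU fun t ht => by rw [h ht]
  simp only [DistribSupersolutionOn, key]

theorem sin_mul_pos_of_le {ω a b L : ℝ} (hω : 0 < ω) (hsize : (b - a) * ω < π) (hL : 0 < L)
    (hLb : L ≤ b - a) : 0 < sin (ω * L) :=
  sin_pos_of_pos_of_lt_pi (by positivity) (by nlinarith)

theorem SinConcaveOn.sigma_combo_le_of_lt {ω a b : ℝ} {F : ℝ → ℝ} (hω : 0 < ω)
    (hsize : (b - a) * ω < π) (hF : SinConcaveOn ω (Icc a b) F) {t₀ t₁ : ℝ}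
    (h₀ : t₀ ∈ Icc a b) (h₁ : t₁ ∈ Icc a b) (hlt : t₀ < t₁) {u : ℝ} (hu : u ∈ Icc (0 : ℝ) 1) :
    sin ((1 - u) * (ω * (t₁ - t₀))) / sin (ω * (t₁ - t₀)) * F t₀
      + sin (u * (ω * (t₁ - t₀))) / sin (ω * (t₁ - t₀)) * F t₁ ≤ F ((1 - u) * t₀ + u * t₁) := by
  have hS : 0 < sin (ω * (t₁ - t₀)) :=
    sin_mul_pos_of_le hω hsize (by linarith) (by linarith [h₀.1, h₁.2])
  rw [div_mul_eq_mul_div, div_mul_eq_mul_div, ← add_div, div_le_iff₀ hS]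
  rcases hu.1.eq_or_lt with rfl | hu0
  · simp [mul_comm]
  rcases hu.2.eq_or_lt with rfl | hu1
  · simp [mul_comm]
  have key := hF h₀ h₁ (t := (1 - u) * t₀ + u * t₁) (by nlinarith) (by nlinarith)
  rw [show t₁ - ((1 - u) * t₀ + u * t₁) = (1 - u) * (t₁ - t₀) by ring,
    show (1 - u) * t₀ + u * t₁ - t₀ = u * (t₁ - t₀) by ring,
    mul_left_comm ω (1 - u), mul_left_comm ω u] at key
  linarith

theorem sigmaConcaveOn_Icc_iff {ω a b : ℝ} {F : ℝ → ℝ} (hω : 0 < ω)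
    (hsize : (b - a) * ω < π) : SigmaConcaveOn ω (Icc a b) F ↔ SinConcaveOn ω (Icc a b) F := by
  constructor
  · intro hF p hp q hq t hpt htq
    have hpq : 0 < q - p := by linarith
    have hS : 0 < sin (ω * (q - p)) :=
      sin_mul_pos_of_le hω hsize hpq (by linarith [hp.1, hq.2])
    have key := hF p hp q hq (by linarith) ((t - p) / (q - p))
      ⟨by positivity, (div_le_one hpq).2 (by linarith)⟩
    rw [abs_of_pos hpq, div_mul_eq_mul_div, div_mul_eq_mul_div, ← add_div, div_le_iff₀ hS,
      show (1 - (t - p) / (q - p)) * (ω * (q - p)) = ω * (q - t) by field_simp; ring,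
      show (t - p) / (q - p) * (ω * (q - p)) = ω * (t - p) by field_simp,
      show (1 - (t - p) / (q - p)) * p + (t - p) / (q - p) * q = t by field_simp; ring] at key
    linarith
  · intro hF t₀ h₀ t₁ h₁ hne u hu
    rcases hne.lt_or_gt with hlt | hlt
    · rw [abs_of_pos (sub_pos.2 hlt)]
      exact hF.sigma_combo_le_of_lt hω hsize h₀ h₁ hlt hu
    · rw [abs_of_neg (sub_neg.2 hlt), neg_sub]
      have key := hF.sigma_combo_le_of_lt hω hsize h₁ h₀ hlt (u := 1 - u)
        ⟨by linarith [hu.2], by linarith [hu.1]⟩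
      rwa [sub_sub_cancel, add_comm, add_comm (u * t₁)] at key

theorem SinConcaveOn.Icc_of_Ioo {ω a b : ℝ} {F : ℝ → ℝ} (hF : Continuous F)
    (h : SinConcaveOn ω (Ioo a b) F) : SinConcaveOn ω (Icc a b) F := by
  intro p hp q hq t hpt htq
  have hlim : ∀ {g : ℝ → ℝ}, Continuous g → Tendsto g (𝓝[>] 0) (𝓝 (g 0)) :=
    fun hg => (hg.tendsto 0).mono_left nhdsWithin_le_nhds
  have hev : ∀ᶠ r in 𝓝[>] (0 : ℝ),
      sin (ω * (q - r - t)) * F (p + r) + sin (ω * (t - (p + r))) * F (q - r)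
        ≤ sin (ω * (q - r - (p + r))) * F t := by
    filter_upwards [Ioo_mem_nhdsGT (lt_min (sub_pos.2 hpt) (sub_pos.2 htq))] with r hr
    have hr₁ := hr.2.trans_le (min_le_left _ _)
    have hr₂ := hr.2.trans_le (min_le_right _ _)
    exact h ⟨by linarith [hp.1, hr.1], by linarith [hq.2]⟩
      ⟨by linarith [hp.1], by linarith [hq.2, hr.1]⟩ (by linarith) (by linarith)
  simpa using le_of_tendsto_of_tendsto (hlim (by fun_prop)) (hlim (by fun_prop)) hev

theorem abs_secondDiff_sub_le {φ : ℝ → ℝ} (hφ : ContDiff ℝ 2 φ) {t h ε : ℝ} (hh : 0 ≤ h)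
    (hε : ∀ s, |s - t| ≤ h → |deriv (deriv φ) s - deriv (deriv φ) t| ≤ ε) :
    |φ (t + h) + φ (t - h) - 2 * φ t - h ^ 2 * deriv (deriv φ) t| ≤ 2 * ε * h ^ 2 := by
  have hd₁ : ∀ x, HasDerivAt φ (deriv φ x) x :=
    fun x => (hφ.differentiable (by norm_num) x).hasDerivAt
  have hd₂ : ∀ x, HasDerivAt (deriv φ) (deriv (deriv φ) x) x :=
    fun x => (hφ.differentiable_deriv_two x).hasDerivAt
  set D := deriv (deriv φ) t
  have hε0 : 0 ≤ ε := (abs_nonneg _).trans (hε t (by simpa using hh))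
  have hg' : ∀ u, HasDerivAt (fun u => deriv φ (t + u) - deriv φ (t - u) - 2 * u * D)
      (deriv (deriv φ) (t + u) + deriv (deriv φ) (t - u) - 2 * D) u := by
    intro u
    have := (((hd₂ (t + u)).comp_const_add t u).sub ((hd₂ (t - u)).comp_const_sub t u)).sub
      (((hasDerivAt_id u).const_mul 2).mul_const D)
    exact this.congr_deriv (by ring)
  have hg : ∀ u, HasDerivAt (fun u => φ (t + u) + φ (t - u) - 2 * φ t - u ^ 2 * D)
      (deriv φ (t + u) - deriv φ (t - u) - 2 * u * D) u := by
    intro u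
    have := ((((hd₁ (t + u)).comp_const_add t u).add ((hd₁ (t - u)).comp_const_sub t u)).sub_const
      (2 * φ t)).sub ((hasDerivAt_pow 2 u).mul_const D)
    exact this.congr_deriv (by ring)
  have hslope : ∀ u ∈ Icc 0 h, |deriv φ (t + u) - deriv φ (t - u) - 2 * u * D| ≤ 2 * ε * u := by
    intro u hu
    have := norm_image_sub_le_of_norm_deriv_le_segment' (C := 2 * ε)
      (fun x _ => (hg' x).hasDerivWithinAt) (fun x hx => ?_) u hu
    · simpa using this
    have h₁ := hε (t + x) (by rw [add_sub_cancel_left, abs_of_nonneg hx.1]; exact hx.2.le)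
    have h₂ := hε (t - x) (by rw [sub_sub_cancel_left, abs_neg, abs_of_nonneg hx.1]; exact hx.2.le)
    rw [Real.norm_eq_abs]
    calc _ = |(deriv (deriv φ) (t + x) - D) + (deriv (deriv φ) (t - x) - D)| := by
          congr 1; ring
      _ ≤ 2 * ε := (abs_add_le _ _).trans (by linarith)
  have := norm_image_sub_le_of_norm_deriv_le_segment' (C := 2 * ε * h)
    (fun x _ => (hg x).hasDerivWithinAt)
    (fun x hx => (hslope x (Ico_subset_Icc_self hx)).trans (by nlinarith [hx.2])) h ⟨hh, le_rfl⟩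
  simp only [add_zero, sub_zero, Real.norm_eq_abs] at this
  convert this using 1
  · congr 1; ring
  · ring

noncomputable def secondDiffQuot (ω h : ℝ) (φ : ℝ → ℝ) (x : ℝ) : ℝ :=
  (φ (x + h) + φ (x - h) - 2 * cos (ω * h) * φ x) / h ^ 2

theorem tendsto_two_sub_two_cos_div_sq (ω : ℝ) :
    Tendsto (fun h => (2 - 2 * cos (ω * h)) / h ^ 2) (𝓝[≠] 0) (𝓝 (ω ^ 2)) := by
  have hsinc : Tendsto (fun h => ω ^ 2 * sinc (ω * h / 2) ^ 2) (𝓝[≠] 0) (𝓝 (ω ^ 2)) := by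
    have := ((by fun_prop : Continuous fun h => ω ^ 2 * sinc (ω * h / 2) ^ 2).tendsto 0)
    simpa using this.mono_left nhdsWithin_le_nhds
  refine hsinc.congr' (eventually_nhdsWithin_of_forall fun h (hh : h ≠ 0) => ?_)
  have hsin : sin (ω * h / 2) = ω * h / 2 * sinc (ω * h / 2) := by
    rcases eq_or_ne (ω * h / 2) 0 with h0 | h0
    · simp [h0]
    · rw [sinc_of_ne_zero h0, mul_div_cancel₀ _ h0]
  have hcos : cos (ω * h) = 1 - 2 * sin (ω * h / 2) ^ 2 := by
    have := cos_two_mul (ω * h / 2)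
    rw [show 2 * (ω * h / 2) = ω * h by ring, cos_sq'] at this
    linarith
  simp only [hcos, hsin]
  field_simp
  ring

theorem tendstoUniformly_secondDiffQuot {φ : ℝ → ℝ} (ω : ℝ) (hφ : ContDiff ℝ 2 φ)
    (huc : UniformContinuous (deriv (deriv φ))) {M : ℝ} (hM : ∀ x, |φ x| ≤ M) :
    TendstoUniformly (fun h => secondDiffQuot ω h φ)
      (fun x => deriv (deriv φ) x + ω ^ 2 * φ x) (𝓝[>] 0) := by
  rw [Metric.tendstoUniformly_iff]
  intro ε hε
  obtain ⟨δ, hδ, hδε⟩ := Metric.uniformContinuous_iff.1 huc (ε / 8) (by positivity)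
  have hM0 : 0 ≤ M := (abs_nonneg _).trans (hM 0)
  have hcos := (tendsto_two_sub_two_cos_div_sq ω).mono_left (nhdsGT_le_nhdsNE 0)
  filter_upwards [Ioo_mem_nhdsGT hδ,
    Metric.tendsto_nhds.1 hcos (ε / (2 * (M + 1))) (by positivity)] with h hh hc x
  rw [Real.dist_eq] at hc
  have hsd := abs_secondDiff_sub_le hφ hh.1.le (t := x) (ε := ε / 8)
    fun s hs => (hδε (by rw [Real.dist_eq]; linarith [hh.2] : dist s x < δ)).le
  have hh0 : 0 < h ^ 2 := by have := hh.1; positivity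
  have hne : h ≠ 0 := hh.1.ne'
  have key : secondDiffQuot ω h φ x - (deriv (deriv φ) x + ω ^ 2 * φ x)
      = (φ (x + h) + φ (x - h) - 2 * φ x - h ^ 2 * deriv (deriv φ) x) / h ^ 2
        + ((2 - 2 * cos (ω * h)) / h ^ 2 - ω ^ 2) * φ x := by
    unfold secondDiffQuot; field_simp; ring
  rw [dist_comm, Real.dist_eq, key]
  have h₁ : |(φ (x + h) + φ (x - h) - 2 * φ x - h ^ 2 * deriv (deriv φ) x) / h ^ 2|
      ≤ 2 * (ε / 8) := by
    rw [abs_div, abs_of_pos hh0, div_le_iff₀ hh0]; exact hsd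
  have h₂ : |((2 - 2 * cos (ω * h)) / h ^ 2 - ω ^ 2) * φ x| ≤ ε / (2 * (M + 1)) * M := by
    rw [abs_mul]; exact mul_le_mul hc.le (hM x) (abs_nonneg _) (by positivity)
  have h₃ : ε / (2 * (M + 1)) * M ≤ ε / 2 := by
    rw [div_mul_eq_mul_div, div_le_div_iff₀ (by positivity) two_pos]; nlinarith
  linarith [abs_add_le ((φ (x + h) + φ (x - h) - 2 * φ x - h ^ 2 * deriv (deriv φ) x) / h ^ 2)
    (((2 - 2 * cos (ω * h)) / h ^ 2 - ω ^ 2) * φ x)]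

theorem tendsto_setIntegral_mul_of_tendstoUniformly {ι : Type*} {l : Filter ι} {a b : ℝ}
    {F g₀ : ℝ → ℝ} {g : ι → ℝ → ℝ} (hF : Continuous F) (hg : ∀ i, Continuous (g i))
    (hg₀ : Continuous g₀) (hlim : TendstoUniformly g g₀ l) :
    Tendsto (fun i => ∫ x in Ioo a b, F x * g i x) l (𝓝 (∫ x in Ioo a b, F x * g₀ x)) := by
  have hint : ∀ {k : ℝ → ℝ}, Continuous k → IntegrableOn k (Ioo a b) :=
    fun hk => hk.integrableOn_Icc.mono_set Ioo_subset_Icc_self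
  set A := ∫ x in Ioo a b, |F x|
  have hA : 0 ≤ A := integral_nonneg fun x => abs_nonneg _
  rw [Metric.tendsto_nhds]
  intro ε hε
  filter_upwards [Metric.tendstoUniformly_iff.1 hlim (ε / (A + 1)) (by positivity)] with i hi
  have hi₁ : IntegrableOn (fun x => F x * g i x) (Ioo a b) := hint (hF.mul (hg i))
  have hi₀ : IntegrableOn (fun x => F x * g₀ x) (Ioo a b) := hint (hF.mul hg₀)
  rw [Real.dist_eq, ← integral_sub hi₁ hi₀]
  calc |∫ x in Ioo a b, (F x * g i x - F x * g₀ x)|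
      ≤ ∫ x in Ioo a b, |F x| * (ε / (A + 1)) := by
        rw [← Real.norm_eq_abs]
        refine norm_integral_le_of_norm_le ((hint hF.abs).mul_const _) (ae_of_all _ fun x => ?_)
        rw [Real.norm_eq_abs, ← mul_sub, abs_mul, abs_sub_comm]
        exact mul_le_mul_of_nonneg_left (hi x).le (abs_nonneg _)
    _ = A * (ε / (A + 1)) := integral_mul_const _ _
    _ < ε := by
      rw [mul_div_assoc', div_lt_iff₀ (by positivity)]; nlinarith

theorem integral_mul_secondDiff_eq {F φ : ℝ → ℝ} (hF : Continuous F) (hφ : Continuous φ)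
    (hcs : HasCompactSupport φ) (h c : ℝ) :
    ∫ x, F x * (φ (x + h) + φ (x - h) - c * φ x)
      = ∫ x, (F (x - h) + F (x + h) - c * F x) * φ x := by
  have hint : ∀ s, Integrable fun x => F x * φ (x + s) := fun s =>
    (hF.mul (hφ.comp (continuous_add_const s))).integrable_of_hasCompactSupport
      (hcs.comp_homeomorph (Homeomorph.addRight s)).mul_left
  have hint' : ∀ s, Integrable fun x => F (x + s) * φ x := fun s =>
    ((hF.comp (continuous_add_const s)).mul hφ).integrable_of_hasCompactSupport hcs.mul_left
  simp only [sub_eq_add_neg _ h]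
  have hshift : ∀ s, ∫ x, F x * φ (x + s) = ∫ x, F (x + -s) * φ x := fun s => by
    rw [← integral_add_right_eq_self (fun x => F x * φ (x + s)) (-s)]
    simp
  have e₁ : ∫ x, F x * (φ (x + h) + φ (x + -h) - c * φ x)
      = (∫ x, F x * φ (x + h)) + (∫ x, F x * φ (x + -h)) - c * ∫ x, F x * φ (x + 0) := by
    have i₁ : Integrable fun x => F x * φ (x + h) + F x * φ (x + -h) := (hint h).add (hint (-h))
    have i₂ : Integrable fun x => c * (F x * φ (x + 0)) := (hint 0).const_mul c
    rw [← integral_const_mul, ← integral_add (hint h) (hint (-h)), ← integral_sub i₁ i₂]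
    simp only [add_zero]; congr 1; ext x; ring
  have e₂ : ∫ x, (F (x + -h) + F (x + h) - c * F x) * φ x
      = (∫ x, F (x + -h) * φ x) + (∫ x, F (x + h) * φ x) - c * ∫ x, F (x + 0) * φ x := by
    have i₁ : Integrable fun x => F (x + -h) * φ x + F (x + h) * φ x :=
      (hint' (-h)).add (hint' h)
    have i₂ : Integrable fun x => c * (F (x + 0) * φ x) := (hint' 0).const_mul c
    rw [← integral_const_mul, ← integral_add (hint' (-h)) (hint' h), ← integral_sub i₁ i₂]
    simp only [add_zero]; congr 1; ext x; ring
  rw [e₁, e₂, hshift h, hshift (-h), hshift 0, neg_neg, neg_zero]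

theorem SinConcaveOn.add_sub_two_cos_mul_nonpos {ω : ℝ} {s : Set ℝ} {F : ℝ → ℝ}
    (hF : SinConcaveOn ω s F) {x h : ℝ} (hω : 0 < ω) (hh : 0 < h) (hπ : ω * h < π)
    (hlo : x - h ∈ s) (hhi : x + h ∈ s) :
    F (x - h) + F (x + h) - 2 * cos (ω * h) * F x ≤ 0 := by
  have key := hF hlo hhi (t := x) (by linarith) (by linarith)
  rw [add_sub_cancel_left, sub_sub_cancel, add_sub_sub_cancel, ← two_mul, mul_left_comm,
    sin_two_mul] at key
  exact nonpos_of_mul_nonpos_right (by linarith) (sin_pos_of_pos_of_lt_pi (by positivity) hπ)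

theorem SinConcaveOn.eventually_setIntegral_mul_secondDiffQuot_nonpos {ω a b : ℝ}
    {F φ : ℝ → ℝ} (hconc : SinConcaveOn ω (Ioo a b) F) (hω : 0 < ω) (hF : Continuous F)
    (hφ : Continuous φ) (hcs : HasCompactSupport φ) (hsupp : tsupport φ ⊆ Ioo a b)
    (hφ0 : ∀ x, 0 ≤ φ x) :
    ∀ᶠ h in 𝓝[>] 0, ∫ x in Ioo a b, F x * secondDiffQuot ω h φ x ≤ 0 := by
  obtain ⟨δ, hδ, hδsub⟩ := hcs.isCompact.exists_cthickening_subset_open isOpen_Ioo hsupp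
  filter_upwards [Ioo_mem_nhdsGT (lt_min hδ (div_pos pi_pos hω))] with h hh
  have hhδ : h ≤ δ := (hh.2.trans_le (min_le_left _ _)).le
  have hπ : ω * h < π := by
    have := hh.2.trans_le (min_le_right _ _)
    rwa [lt_div_iff₀ hω, mul_comm] at this
  have hnear : ∀ x ∈ tsupport φ, ∀ y, |y - x| ≤ h → y ∈ Ioo a b := fun x hx y hy =>
    hδsub (Metric.mem_cthickening_of_dist_le y x δ _ hx (by rw [Real.dist_eq]; linarith))
  have hshift : ∀ x, |x + h - x| ≤ h ∧ |x - h - x| ≤ h := fun x => by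
    simp [abs_of_pos hh.1]
  have hvanish : ∀ x ∉ Ioo a b, F x * secondDiffQuot ω h φ x = 0 := by
    intro x hx
    have hzero : ∀ y, |x - y| ≤ h → φ y = 0 := fun y hy =>
      image_eq_zero_of_notMem_tsupport fun hy' => hx (hnear y hy' x hy)
    simp [secondDiffQuot, hzero (x + h) (by simpa [abs_sub_comm] using (hshift x).1),
      hzero (x - h) (by simpa [abs_sub_comm] using (hshift x).2), hzero x (by simp [hh.1.le])]
  rw [setIntegral_eq_integral_of_forall_compl_eq_zero hvanish]
  simp only [secondDiffQuot, mul_div_assoc']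
  rw [integral_div, integral_mul_secondDiff_eq hF hφ hcs]
  refine div_nonpos_of_nonpos_of_nonneg (integral_nonpos fun x => ?_) (sq_nonneg h)
  by_cases hx : x ∈ tsupport φ
  · exact mul_nonpos_of_nonpos_of_nonneg (hconc.add_sub_two_cos_mul_nonpos hω hh.1 hπ
      (hnear x hx _ (hshift x).2) (hnear x hx _ (hshift x).1)) (hφ0 x)
  · simp [image_eq_zero_of_notMem_tsupport hx]

theorem SinConcaveOn.distribSupersolutionOn {ω a b : ℝ} {F : ℝ → ℝ}
    (hconc : SinConcaveOn ω (Ioo a b) F) (hω : 0 < ω) (hF : Continuous F) :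
    DistribSupersolutionOn (ω ^ 2) (Ioo a b) F := by
  intro φ hφ hcs hsupp hφ0
  have hφ2 : ContDiff ℝ 2 φ := hφ.of_le (WithTop.coe_le_coe.2 le_top)
  have hd2 : Continuous (deriv (deriv φ)) := (hφ2.deriv' (n := 1)).continuous_deriv_one
  obtain ⟨M, hM⟩ := hφ.continuous.bounded_above_of_compact_support hcs
  have hlim := tendsto_setIntegral_mul_of_tendstoUniformly (a := a) (b := b) hF
    (fun h => by unfold secondDiffQuot; fun_prop) (by fun_prop)
    (tendstoUniformly_secondDiffQuot ω hφ2 (hcs.deriv.deriv.uniformContinuous_of_continuous hd2) hM)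
  exact le_of_tendsto hlim
    (hconc.eventually_setIntegral_mul_secondDiffQuot_nonpos hω hF hφ.continuous hcs hsupp hφ0)

theorem integral_sin_mul_deriv_deriv_add (ω c r A B : ℝ) {χ : ℝ → ℝ} (hχ : ContDiff ℝ 2 χ) :
    ∫ y in A..B, c * sin (ω * (y - r)) * (deriv (deriv χ) y + ω ^ 2 * χ y)
      = (c * sin (ω * (B - r)) * deriv χ B - c * ω * cos (ω * (B - r)) * χ B)
        - (c * sin (ω * (A - r)) * deriv χ A - c * ω * cos (ω * (A - r)) * χ A) := by
  have hd₁ : ∀ y, HasDerivAt χ (deriv χ y) y :=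
    fun y => (hχ.differentiable (by norm_num) y).hasDerivAt
  have hd₂ : ∀ y, HasDerivAt (deriv χ) (deriv (deriv χ) y) y :=
    fun y => (hχ.differentiable_deriv_two y).hasDerivAt
  have hd₂c : Continuous (deriv (deriv χ)) := (hχ.deriv' (n := 1)).continuous_deriv_one
  refine intervalIntegral.integral_eq_sub_of_hasDerivAt
    (f := fun y => c * sin (ω * (y - r)) * deriv χ y - c * ω * cos (ω * (y - r)) * χ y)
    (fun y _ => ?_)
    ((by fun_prop : Continuous fun y =>
      c * sin (ω * (y - r)) * (deriv (deriv χ) y + ω ^ 2 * χ y)).intervalIntegrable _ _)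
  have hsin : HasDerivAt (fun y => sin (ω * (y - r))) (cos (ω * (y - r)) * ω) y := by
    simpa using ((hasDerivAt_id y).sub_const r).const_mul ω |>.sin
  have hcos : HasDerivAt (fun y => cos (ω * (y - r))) (-sin (ω * (y - r)) * ω) y := by
    simpa using ((hasDerivAt_id y).sub_const r).const_mul ω |>.cos
  have := ((hsin.const_mul c).mul (hd₂ y)).sub (((hcos.const_mul (c * ω))).mul (hd₁ y))
  exact this.congr_deriv (by ring)

/-- `-ω sin (ω (q - p))` times the Green function of `χ ↦ χ'' + ω ^ 2 * χ` on `[p, q]` with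
Dirichlet boundary conditions and pole at `t`. -/
noncomputable def sinGreen (ω p q t : ℝ) : ℝ → ℝ :=
  (Icc p t).indicator (fun y => sin (ω * (q - t)) * sin (ω * (y - p)))
    + (Ioc t q).indicator (fun y => sin (ω * (t - p)) * sin (ω * (q - y)))

theorem integral_sinGreen_mul (ω : ℝ) {p q t : ℝ} (hpt : p ≤ t) (htq : t ≤ q) {χ : ℝ → ℝ}
    (hχ : ContDiff ℝ 2 χ) :
    ∫ y, sinGreen ω p q t y * (deriv (deriv χ) y + ω ^ 2 * χ y)
      = ω * (sin (ω * (q - t)) * χ p + sin (ω * (t - p)) * χ q - sin (ω * (q - p)) * χ t) := by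
  have hd₂c : Continuous (deriv (deriv χ)) := (hχ.deriv' (n := 1)).continuous_deriv_one
  set ψ := fun y => deriv (deriv χ) y + ω ^ 2 * χ y
  have hψ : Continuous ψ := by fun_prop
  have hsplit : (fun y => sinGreen ω p q t y * ψ y)
      = fun y => (Icc p t).indicator (fun y => sin (ω * (q - t)) * sin (ω * (y - p)) * ψ y) y
        + (Ioc t q).indicator (fun y => -sin (ω * (t - p)) * sin (ω * (y - q)) * ψ y) y := by
    ext y
    simp only [sinGreen, Pi.add_apply, indicator_apply]
    rw [show ω * (q - y) = -(ω * (y - q)) by ring, sin_neg]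
    split_ifs <;> ring
  have hint : ∀ c r, IntegrableOn (fun y => c * sin (ω * (y - r)) * ψ y) (Icc p q) :=
    fun c r => (by fun_prop : Continuous fun y => c * sin (ω * (y - r)) * ψ y).integrableOn_Icc
  rw [hsplit, integral_add ((hint _ _).mono_set (Icc_subset_Icc_right htq)
      |>.integrable_indicator measurableSet_Icc)
    ((hint _ _).mono_set (Ioc_subset_Icc_self.trans (Icc_subset_Icc_left hpt))
      |>.integrable_indicator measurableSet_Ioc),
    integral_indicator measurableSet_Icc, integral_indicator measurableSet_Ioc,
    integral_Icc_eq_integral_Ioc, ← intervalIntegral.integral_of_le hpt,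
    ← intervalIntegral.integral_of_le htq, integral_sin_mul_deriv_deriv_add ω _ _ _ _ hχ,
    integral_sin_mul_deriv_deriv_add ω _ _ _ _ hχ]
  simp only [sub_self, mul_zero, sin_zero, cos_zero]
  rw [show ω * (t - q) = -(ω * (q - t)) by ring, sin_neg, cos_neg,
    show ω * (q - p) = ω * (q - t) + ω * (t - p) by ring, sin_add]
  ring

section sinGreen

variable {ω p q t : ℝ}

theorem sinGreen_nonneg (hω : 0 ≤ ω) (hpt : p ≤ t) (htq : t ≤ q) (hπ : ω * (q - p) ≤ π)
    (y : ℝ) : 0 ≤ sinGreen ω p q t y := by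
  have hsin : ∀ x, 0 ≤ x → x ≤ q - p → 0 ≤ sin (ω * x) := fun x hx hxq =>
    sin_nonneg_of_nonneg_of_le_pi (mul_nonneg hω hx) ((mul_le_mul_of_nonneg_left hxq hω).trans hπ)
  refine add_nonneg (indicator_nonneg (fun y hy => ?_) y) (indicator_nonneg (fun y hy => ?_) y)
  · exact mul_nonneg (hsin _ (by linarith) (by linarith)) (hsin _ (by linarith [hy.1])
      (by linarith [hy.2]))
  · exact mul_nonneg (hsin _ (by linarith) (by linarith)) (hsin _ (by linarith [hy.2])
      (by linarith [hy.1]))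

theorem sinGreen_eq_zero (hpt : p ≤ t) (htq : t ≤ q) {y : ℝ} (hy : y ∉ Icc p q) :
    sinGreen ω p q t y = 0 := by
  have h₁ : y ∉ Icc p t := fun h => hy ⟨h.1, h.2.trans htq⟩
  have h₂ : y ∉ Ioc t q := fun h => hy ⟨hpt.trans h.1.le, h.2⟩
  simp [sinGreen, indicator_of_notMem h₁, indicator_of_notMem h₂]

theorem hasCompactSupport_sinGreen (hpt : p ≤ t) (htq : t ≤ q) :
    HasCompactSupport (sinGreen ω p q t) :=
  HasCompactSupport.intro isCompact_Icc fun _ hy => sinGreen_eq_zero hpt htq hy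

theorem integrable_sinGreen : Integrable (sinGreen ω p q t) :=
  ((by fun_prop : Continuous fun y => sin (ω * (q - t)) * sin (ω * (y - p))).integrableOn_Icc
      |>.integrable_indicator measurableSet_Icc).add
    ((by fun_prop : Continuous fun y => sin (ω * (t - p)) * sin (ω * (q - y))).integrableOn_Icc
      |>.mono_set Ioc_subset_Icc_self |>.integrable_indicator measurableSet_Ioc)

open scoped Convolution in
theorem deriv_deriv_sinGreen_convolution_add (hpt : p ≤ t) (htq : t ≤ q) {ρ : ℝ → ℝ}
    (hρ : ContDiff ℝ (⊤ : ℕ∞) ρ) (hcs : HasCompactSupport ρ) (x : ℝ) :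
    deriv (deriv (sinGreen ω p q t ⋆ ρ)) x + ω ^ 2 * (sinGreen ω p q t ⋆ ρ) x
      = ω * (sin (ω * (q - t)) * ρ (x - p) + sin (ω * (t - p)) * ρ (x - q)
        - sin (ω * (q - p)) * ρ (x - t)) := by
  have hG := (integrable_sinGreen (ω := ω) (p := p) (q := q) (t := t)).locallyIntegrable
  have hρ₂ : ContDiff ℝ 2 ρ := hρ.of_le (WithTop.coe_le_coe.2 le_top)
  have hρ₁' : ContDiff ℝ 1 (deriv ρ) := hρ₂.deriv' (n := 1)
  have hder : ∀ {g : ℝ → ℝ}, HasCompactSupport g → ContDiff ℝ 1 g →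
      deriv (sinGreen ω p q t ⋆ g) = sinGreen ω p q t ⋆ deriv g := fun hg hg' =>
    funext fun x => (hg.hasDerivAt_convolution_right _ hG hg' x).deriv
  have hχ : ContDiff ℝ 2 fun y => ρ (x - y) := hρ₂.comp (by fun_prop)
  have hχ'' : deriv (deriv fun y => ρ (x - y)) = fun y => deriv (deriv ρ) (x - y) := by
    have h₁ : deriv (fun y => ρ (x - y)) = fun y => -deriv ρ (x - y) :=
      funext fun y => deriv_comp_const_sub ..
    ext y
    rw [h₁, deriv.fun_neg, deriv_comp_const_sub, neg_neg]
  have key := integral_sinGreen_mul ω hpt htq hχ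
  rw [hχ''] at key
  have hi₂ : Integrable fun y => sinGreen ω p q t y * deriv (deriv ρ) (x - y) :=
    hcs.deriv.deriv.convolutionExists_right (ContinuousLinearMap.lsmul ℝ ℝ) hG
      (hρ₁'.continuous_deriv_one) x
  have hi₀ : Integrable fun y => ω ^ 2 * (sinGreen ω p q t y * ρ (x - y)) :=
    (hcs.convolutionExists_right (ContinuousLinearMap.lsmul ℝ ℝ) hG hρ.continuous x).const_mul _
  rw [hder hcs (hρ₂.of_le (by norm_num)), hder hcs.deriv hρ₁', convolution_lsmul,
    convolution_lsmul, ← key, ← integral_const_mul]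
  simp only [smul_eq_mul]
  rw [← integral_add hi₂ hi₀]
  congr 1; ext y; ring

open scoped Convolution in
theorem tsupport_sinGreen_convolution_subset (hpt : p ≤ t) (htq : t ≤ q)
    (ρ : ContDiffBump (0 : ℝ)) :
    tsupport (sinGreen ω p q t ⋆ ρ.normed volume) ⊆ Icc (p - ρ.rOut) (q + ρ.rOut) := by
  refine closure_minimal (fun x hx => ?_) isClosed_Icc
  obtain ⟨y, hy, z, hz, rfl⟩ := support_convolution_subset _ hx
  have hy' : y ∈ Icc p q := by_contra fun h => hy (sinGreen_eq_zero hpt htq h)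
  rw [ρ.support_normed_eq, Metric.mem_ball, dist_zero_right, Real.norm_eq_abs, abs_lt] at hz
  exact ⟨by linarith [hy'.1, hz.1], by linarith [hy'.2, hz.2]⟩

end sinGreen

theorem ContDiffBump.normed_eq_zero_of_rOut_le {ρ : ContDiffBump (0 : ℝ)} {x : ℝ}
    (hx : ρ.rOut ≤ |x|) : ρ.normed volume x = 0 := by
  rw [ContDiffBump.normed_def, ρ.zero_of_le_dist (by rwa [dist_zero_right, Real.norm_eq_abs]),
    zero_div]

open scoped Convolution in
theorem tendsto_setIntegral_mul_normed_bump {ι : Type*} {l : Filter ι}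
    {ρ : ι → ContDiffBump (0 : ℝ)} (hρ : Tendsto (fun i => (ρ i).rOut) l (𝓝 0)) {F : ℝ → ℝ}
    (hF : Continuous F) {a b m : ℝ} (hm : m ∈ Ioo a b) :
    Tendsto (fun i => ∫ x in Ioo a b, F x * (ρ i).normed volume (x - m)) l (𝓝 (F m)) := by
  refine (ContDiffBump.convolution_tendsto_right_of_continuous (μ := volume) hρ hF m).congr' ?_
  filter_upwards [hρ.eventually (gt_mem_nhds (lt_min (sub_pos.2 hm.1) (sub_pos.2 hm.2)))]
    with i hi
  rw [convolution_lsmul_swap, setIntegral_eq_integral_of_forall_compl_eq_zero]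
  · congr 1; ext x; rw [smul_eq_mul, mul_comm, ← neg_sub, ContDiffBump.normed_neg]
  · intro x hx
    rw [ContDiffBump.normed_eq_zero_of_rOut_le, mul_zero]
    simp only [mem_Ioo, not_and_or, not_lt] at hx
    rcases hx with hx | hx
    · rw [abs_of_nonpos (by linarith [hm.1])]; linarith [min_le_left (m - a) (b - m)]
    · rw [abs_of_nonneg (by linarith [hm.2])]; linarith [min_le_right (m - a) (b - m)]

open scoped Convolution in
theorem DistribSupersolutionOn.sin_mul_integral_bump_le {ω a b : ℝ} {F : ℝ → ℝ}
    (hdist : DistribSupersolutionOn (ω ^ 2) (Ioo a b) F) (hω : 0 < ω)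
    (hsize : (b - a) * ω < π) (hF : Continuous F) {p q t : ℝ} (hpt : p < t) (htq : t < q)
    (ρ : ContDiffBump (0 : ℝ)) (hp : a < p - ρ.rOut) (hq : q + ρ.rOut < b) :
    sin (ω * (q - t)) * (∫ x in Ioo a b, F x * ρ.normed volume (x - p))
      + sin (ω * (t - p)) * (∫ x in Ioo a b, F x * ρ.normed volume (x - q))
      ≤ sin (ω * (q - p)) * ∫ x in Ioo a b, F x * ρ.normed volume (x - t) := by
  have hG := (integrable_sinGreen (ω := ω) (p := p) (q := q) (t := t)).locallyIntegrable
  have hφ : ContDiff ℝ (⊤ : ℕ∞) (sinGreen ω p q t ⋆ ρ.normed volume) :=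
    ρ.hasCompactSupport_normed.contDiff_convolution_right _ hG ρ.contDiff_normed
  have hcs : HasCompactSupport (sinGreen ω p q t ⋆ ρ.normed volume) :=
    (hasCompactSupport_sinGreen hpt.le htq.le).convolution _ ρ.hasCompactSupport_normed
  have hsupp : tsupport (sinGreen ω p q t ⋆ ρ.normed volume) ⊆ Ioo a b :=
    (tsupport_sinGreen_convolution_subset hpt.le htq.le ρ).trans (Icc_subset_Ioo hp hq)
  have hπ : ω * (q - p) ≤ π := by nlinarith [ρ.rOut_pos]
  have hφ0 : ∀ x, 0 ≤ (sinGreen ω p q t ⋆ ρ.normed volume) x := fun x =>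
    integral_nonneg fun y =>
      mul_nonneg (sinGreen_nonneg hω.le hpt.le htq.le hπ y) (ρ.nonneg_normed _)
  have hint : ∀ m, IntegrableOn (fun x => F x * ρ.normed volume (x - m)) (Ioo a b) := fun m =>
    (hF.mul (ρ.continuous_normed.comp (continuous_sub_right m))).integrableOn_Icc.mono_set
      Ioo_subset_Icc_self
  have key := hdist _ hφ hcs hsupp hφ0
  simp_rw [deriv_deriv_sinGreen_convolution_add hpt.le htq.le ρ.contDiff_normed
    ρ.hasCompactSupport_normed] at key
  have hlin : ∫ x in Ioo a b, F x * (ω * (sin (ω * (q - t)) * ρ.normed volume (x - p)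
        + sin (ω * (t - p)) * ρ.normed volume (x - q)
        - sin (ω * (q - p)) * ρ.normed volume (x - t)))
      = ω * (sin (ω * (q - t)) * (∫ x in Ioo a b, F x * ρ.normed volume (x - p))
        + sin (ω * (t - p)) * (∫ x in Ioo a b, F x * ρ.normed volume (x - q))
        - sin (ω * (q - p)) * ∫ x in Ioo a b, F x * ρ.normed volume (x - t)) := by
    have hpq : IntegrableOn (fun x => sin (ω * (q - t)) * (F x * ρ.normed volume (x - p))
        + sin (ω * (t - p)) * (F x * ρ.normed volume (x - q))) (Ioo a b) :=
      ((hint p).const_mul _).add ((hint q).const_mul _)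
    rw [← integral_const_mul, ← integral_const_mul, ← integral_const_mul,
      ← integral_add ((hint p).const_mul _) ((hint q).const_mul _),
      ← integral_sub hpq ((hint t).const_mul _), ← integral_const_mul]
    congr 1; ext x; ring
  rw [hlin] at key
  linarith [nonpos_of_mul_nonpos_right key hω]

theorem DistribSupersolutionOn.sinConcaveOn {ω a b : ℝ} {F : ℝ → ℝ}
    (hdist : DistribSupersolutionOn (ω ^ 2) (Ioo a b) F) (hω : 0 < ω)
    (hsize : (b - a) * ω < π) (hF : Continuous F) : SinConcaveOn ω (Ioo a b) F := by
  intro p hp q hq t hpt htq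
  let ρ : ℕ → ContDiffBump (0 : ℝ) := fun n =>
    ⟨1 / (2 * (n + 1)), 1 / (n + 1), by positivity,
      by rw [one_div_lt_one_div (by positivity) (by positivity)]; linarith⟩
  have hρ : Tendsto (fun n => (ρ n).rOut) atTop (𝓝 0) := tendsto_one_div_add_atTop_nhds_zero_nat
  have hlim : ∀ m ∈ Ioo a b, Tendsto (fun n => ∫ x in Ioo a b, F x * (ρ n).normed volume (x - m))
      atTop (𝓝 (F m)) := fun m hm => tendsto_setIntegral_mul_normed_bump hρ hF hm
  refine le_of_tendsto_of_tendsto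
    ((tendsto_const_nhds.mul (hlim p hp)).add (tendsto_const_nhds.mul (hlim q hq)))
    (tendsto_const_nhds.mul (hlim t ⟨hp.1.trans hpt, htq.trans hq.2⟩)) ?_
  filter_upwards [hρ.eventually (gt_mem_nhds (lt_min (sub_pos.2 hp.1) (sub_pos.2 hq.2)))]
    with n hn
  exact hdist.sin_mul_integral_bump_le hω hsize hF hpt htq (ρ n)
    (by linarith [min_le_left (p - a) (b - q)]) (by linarith [min_le_right (p - a) (b - q)])

theorem statement_7_general (K a b : ℝ) (hK : 0 < K)
    (f : ℝ → ℝ) (hf : ∃ C : NNReal, LipschitzOnWith C f (Set.Icc a b))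
    (hsize : (b - a) * Real.sqrt K < Real.pi) :
    (∀ φ : ℝ → ℝ, ContDiff ℝ (⊤ : ℕ∞) φ → HasCompactSupport φ →
        tsupport φ ⊆ Set.Ioo a b → (∀ t, 0 ≤ φ t) →
        ∫ t in Set.Ioo a b, f t * (deriv (deriv φ) t + K * φ t) ≤ 0)
      ↔
    (∀ t₀ ∈ Set.Icc a b, ∀ t₁ ∈ Set.Icc a b, t₀ ≠ t₁ → ∀ s ∈ Set.Icc (0 : ℝ) 1,
        Real.sin ((1 - s) * (Real.sqrt K * |t₁ - t₀|)) / Real.sin (Real.sqrt K * |t₁ - t₀|)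
            * f t₀
          + Real.sin (s * (Real.sqrt K * |t₁ - t₀|)) / Real.sin (Real.sqrt K * |t₁ - t₀|)
            * f t₁
          ≤ f ((1 - s) * t₀ + s * t₁)) := by
  obtain ⟨C, hC⟩ := hf
  obtain ⟨F, hFlip, hfF⟩ := hC.extend_real
  have hFc : Continuous F := hFlip.continuous
  obtain ⟨ω, hω, rfl⟩ : ∃ ω, 0 < ω ∧ K = ω ^ 2 :=
    ⟨√K, sqrt_pos.2 hK, (sq_sqrt hK.le).symm⟩
  rw [sqrt_sq hω.le] at hsize ⊢
  change DistribSupersolutionOn (ω ^ 2) (Ioo a b) f ↔ SigmaConcaveOn ω (Icc a b) f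
  rw [distribSupersolutionOn_congr measurableSet_Ioo (hfF.mono Ioo_subset_Icc_self),
    sigmaConcaveOn_congr (convex_Icc a b) hfF, sigmaConcaveOn_Icc_iff hω hsize]
  exact ⟨fun h => (h.sinConcaveOn hω hsize hFc).Icc_of_Ioo hFc,
    fun h => (h.mono Ioo_subset_Icc_self).distribSupersolutionOn hω hFc⟩

/-- For `K > 0`, a nonnegative Lipschitz function `f` on `[a,b]` with `(b-a)√K < π`
satisfies `f'' + K f ≤ 0` in the distributional sense on `(a,b)` if and only if it
satisfies the `σ`-concavity inequality with coefficients
`σ_K^{(s)}(θ) = sin(s √K θ)/sin(√K θ)`. -/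
theorem statement_7 (K a b : ℝ) (hK : 0 < K) (hab : a < b)
    (f : ℝ → ℝ) (hf : ∃ C : NNReal, LipschitzOnWith C f (Set.Icc a b))
    (hnonneg : ∀ t ∈ Set.Icc a b, 0 ≤ f t)
    (hsize : (b - a) * Real.sqrt K < Real.pi) :
    (∀ φ : ℝ → ℝ, ContDiff ℝ (⊤ : ℕ∞) φ → HasCompactSupport φ →
        tsupport φ ⊆ Set.Ioo a b → (∀ t, 0 ≤ φ t) →
        ∫ t in Set.Ioo a b, f t * (deriv (deriv φ) t + K * φ t) ≤ 0)
      ↔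
    (∀ t₀ ∈ Set.Icc a b, ∀ t₁ ∈ Set.Icc a b, t₀ ≠ t₁ → ∀ s ∈ Set.Icc (0 : ℝ) 1,
        Real.sin ((1 - s) * (Real.sqrt K * |t₁ - t₀|)) / Real.sin (Real.sqrt K * |t₁ - t₀|)
            * f t₀
          + Real.sin (s * (Real.sqrt K * |t₁ - t₀|)) / Real.sin (Real.sqrt K * |t₁ - t₀|)
            * f t₁
          ≤ f ((1 - s) * t₀ + s * t₁)) :=
  statement_7_general K a b hK f hf hsize
end

section
/- Let I ⊆ ℝ be an interval, K ∈ ℝ, N ≥ 1, and let f: I → ℝ be C² with f(t) > 0 and f''(t) + K f(t) ≤ 0 for all t ∈ I. Then for every C² function u: I → ℝ and every t ∈ I, (u''(t))² + N·( (f'(t)/f(t))² − f''(t)/f(t) )·(u'(t))² ≥ K N (u'(t))² + (1/(N+1))·( u''(t) + N (f'(t)/f(t)) u'(t) )². -/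
/-- Pointwise Bakry–Émery inequality `BE(KN, N+1)` for the one-dimensional weighted space
`(I, f^N dt)`: if `f > 0` and `f'' + K f ≤ 0` on the interval `I` and `N ≥ 1`, then for
every `C²` function `u` and every `t ∈ I`,
`(u'')² + N ((f'/f)² - f''/f) (u')² ≥ K N (u')² + (u'' + N (f'/f) u')²/(N+1)`. -/
theorem statement_13 (I : Set ℝ) (hIconv : Convex ℝ I) (K N : ℝ) (hN : 1 ≤ N)
    (f f' f'' : ℝ → ℝ)
    (hf' : ∀ t ∈ I, HasDerivWithinAt f (f' t) I t)
    (hf'' : ∀ t ∈ I, HasDerivWithinAt f' (f'' t) I t)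
    (hf''cont : ContinuousOn f'' I)
    (hfpos : ∀ t ∈ I, 0 < f t)
    (hconc : ∀ t ∈ I, f'' t + K * f t ≤ 0) :
    ∀ u u' u'' : ℝ → ℝ,
      (∀ t ∈ I, HasDerivWithinAt u (u' t) I t) →
      (∀ t ∈ I, HasDerivWithinAt u' (u'' t) I t) →
      ContinuousOn u'' I →
      ∀ t ∈ I,
        K * N * u' t ^ 2 + 1 / (N + 1) * (u'' t + N * (f' t / f t) * u' t) ^ 2
          ≤ u'' t ^ 2 + N * ((f' t / f t) ^ 2 - f'' t / f t) * u' t ^ 2 := by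
  intro u u' u'' _ _ _ t ht
  have hfpos := hfpos t ht
  have hconc := hconc t ht
  set a := u'' t
  set b := u' t
  set x := f' t / f t
  have hN0 : (0:ℝ) < N := by linarith
  have hN1 : (0:ℝ) < N + 1 := by linarith
  -- f''/f ≤ -K
  have h1 : f'' t / f t ≤ -K := by
    rw [div_le_iff₀ hfpos]; linarith
  have key : 1 / (N + 1) * (a + N * x * b) ^ 2 ≤ a ^ 2 + N * x ^ 2 * b ^ 2 := by
    rw [div_mul_eq_mul_div, div_le_iff₀ hN1]
    nlinarith [sq_nonneg (N * x * b - N * a), sq_nonneg (x * b - a)]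
  have h2 : K * N * b ^ 2 ≤ N * (- (f'' t / f t)) * b ^ 2 := by
    have : K ≤ - (f'' t / f t) := by linarith
    nlinarith [mul_nonneg (mul_nonneg hN0.le (sub_nonneg.2 this)) (sq_nonneg b)]
  nlinarith [key, h2]
end

section
/- Let I ⊆ ℝ be an open interval, N ∈ ℝ, and let f: I → ℝ be smooth with f(t) > 0 for all t ∈ I. For smooth v define L v = v'' + N (f'/f) v'. Then for all smooth compactly supported u, φ: I → ℝ, ∫_I (1/2) u'(t)² · (Lφ)(t) · f(t)^N dt − ∫_I u'(t) · (Lu)'(t) · φ(t) · f(t)^N dt = ∫_I ( u''(t)² + N·( (f'(t)/f(t))² − f''(t)/f(t) )·u'(t)² ) φ(t) f(t)^N dt. -/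
/-!
Write `L v = v'' + b v'` with `b = N f'/f` and `w = f^N`, so that `w' = b w`. Pointwise,
`½ u'² (Lφ) w - u' (Lu)' φ w - (u''² - b' u'²) φ w` is the derivative of the flux
`(½ u'² φ' - u' u'' φ) w`, which is compactly supported in `I` together with `φ`; hence its
integral vanishes. Finally `-b' = N ((f'/f)² - f''/f)`.
-/

open MeasureTheory Set Function

theorem setIntegral_eq_zero_of_hasDerivAt_of_tsupport_subset {E : Type*} [NormedAddCommGroup E]
    [NormedSpace ℝ E] {I : Set ℝ} {G g : ℝ → E} (hI : IsOpen I)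
    (hG : ∀ t ∈ I, HasDerivAt G (g t) t) (hg : IntegrableOn g I)
    (hGc : HasCompactSupport G) (hGI : tsupport G ⊆ I) :
    ∫ t in I, g t = 0 := by
  have hderiv : ∀ t, HasDerivAt G (I.indicator g t) t := by
    intro t
    by_cases ht : t ∈ I
    · simpa only [indicator_of_mem ht] using hG t ht
    · rw [indicator_of_notMem ht]
      exact (hasDerivAt_const t 0).congr_of_eventuallyEq
        (notMem_tsupport_iff_eventuallyEq.mp fun h => ht (hGI h))
  have hGcont : Continuous G := continuous_iff_continuousAt.mpr fun t => (hderiv t).continuousAt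
  rw [← integral_indicator hI.measurableSet]
  exact integral_eq_zero_of_hasDerivAt_of_integrable hderiv
    (hg.integrable_indicator hI.measurableSet) (hGcont.integrable_of_hasCompactSupport hGc)

theorem ContinuousOn.integrableOn_of_support_subset_compact {X E : Type*} [TopologicalSpace X]
    [T2Space X] [MeasurableSpace X] [OpensMeasurableSpace X] [NormedAddCommGroup E]
    {μ : Measure X} [IsFiniteMeasureOnCompacts μ] {I K : Set X} {F : X → E}
    (hF : ContinuousOn F I) (hI : MeasurableSet I) (hK : IsCompact K) (hKI : K ⊆ I)
    (hFK : support F ⊆ K) : IntegrableOn F I μ :=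
  ((hF.mono hKI).integrableOn_compact hK).of_forall_sdiff_eq_zero hI
    fun _ ht => notMem_support.mp fun h => ht.2 (hFK h)

theorem HasDerivAt.rpow_const_of_pos {f : ℝ → ℝ} {f' t : ℝ} (hf : HasDerivAt f f' t)
    (ht : 0 < f t) (N : ℝ) : HasDerivAt (fun s => f s ^ N) (N * (f' / f t) * f t ^ N) t := by
  refine (hf.rpow_const (p := N) (Or.inl ht.ne')).congr_deriv ?_
  rw [Real.rpow_sub_one ht.ne']
  field_simp

theorem hasDerivAt_bochnerFlux {u φ b w : ℝ → ℝ} {t : ℝ}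
    (hu₁ : DifferentiableAt ℝ (deriv u) t) (hu₂ : DifferentiableAt ℝ (deriv (deriv u)) t)
    (hφ₀ : DifferentiableAt ℝ φ t) (hφ₁ : DifferentiableAt ℝ (deriv φ) t)
    (hb : DifferentiableAt ℝ b t) (hw : HasDerivAt w (b t * w t) t) :
    HasDerivAt
      (fun s => (1 / 2 * deriv u s ^ 2 * deriv φ s - deriv u s * deriv (deriv u) s * φ s) * w s)
      (1 / 2 * deriv u t ^ 2 * (deriv (deriv φ) t + b t * deriv φ t) * w t
        - deriv u t * deriv (fun s => deriv (deriv u) s + b s * deriv u s) t * φ t * w t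
        - (deriv (deriv u) t ^ 2 - deriv b t * deriv u t ^ 2) * φ t * w t) t := by
  have hLu : deriv (fun s => deriv (deriv u) s + b s * deriv u s) t
      = deriv (deriv (deriv u)) t + (deriv b t * deriv u t + b t * deriv (deriv u) t) :=
    (hu₂.hasDerivAt.add (hb.hasDerivAt.mul hu₁.hasDerivAt)).deriv
  rw [hLu]
  refine (((((hu₁.hasDerivAt.pow 2).const_mul (1 / 2)).mul hφ₁.hasDerivAt).sub
    ((hu₁.hasDerivAt.mul hu₂.hasDerivAt).mul hφ₀.hasDerivAt)).mul hw).congr_deriv ?_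
  simp only [Pi.mul_apply, Pi.sub_apply, Pi.pow_apply]
  ring

theorem setIntegral_weighted_bochner {I : Set ℝ} {u φ b w : ℝ → ℝ} (hI : IsOpen I)
    (hb : ContDiffOn ℝ 1 b I) (hw : ∀ t ∈ I, HasDerivAt w (b t * w t) t)
    (hu : ContDiff ℝ 3 u) (hφ : ContDiff ℝ 2 φ) (hcφ : HasCompactSupport φ)
    (hφI : tsupport φ ⊆ I) :
    (∫ t in I, 1 / 2 * deriv u t ^ 2 * (deriv (deriv φ) t + b t * deriv φ t) * w t)
      - (∫ t in I, deriv u t * deriv (fun s => deriv (deriv u) s + b s * deriv u s) t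
          * φ t * w t)
      = ∫ t in I, (deriv (deriv u) t ^ 2 - deriv b t * deriv u t ^ 2) * φ t * w t := by
  have hu₁ : ContDiff ℝ 2 (deriv u) := hu.deriv'
  have hu₂ : ContDiff ℝ 1 (deriv (deriv u)) := hu₁.deriv'
  have hφ₁ : ContDiff ℝ 1 (deriv φ) := hφ.deriv'
  have hLu : ContDiffOn ℝ 1 (fun s => deriv (deriv u) s + b s * deriv u s) I :=
    hu₂.contDiffOn.add (hb.mul (hu₁.of_le (by norm_num)).contDiffOn)
  have hwc : ContinuousOn w I := fun t ht => (hw t ht).continuousAt.continuousWithinAt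
  have hbc : ContinuousOn b I := hb.continuousOn
  have hb'c : ContinuousOn (deriv b) I := hb.continuousOn_deriv_of_isOpen hI le_rfl
  have hLu'c := hLu.continuousOn_deriv_of_isOpen hI le_rfl
  have hu₁c := hu₁.continuous
  have hu₂c := hu₂.continuous
  have hφc := hφ.continuous
  have hφ₁c := hφ₁.continuous
  have hφ₂c := hφ₁.continuous_deriv le_rfl
  have hφ0 : ∀ t ∉ tsupport φ, φ t = 0 ∧ deriv φ t = 0 ∧ deriv (deriv φ) t = 0 := fun t ht =>
    ⟨image_eq_zero_of_notMem_tsupport ht,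
      image_eq_zero_of_notMem_tsupport fun h => ht (tsupport_deriv_subset h),
      notMem_support.mp fun h => ht (tsupport_deriv_subset (support_deriv_subset h))⟩
  have hint : ∀ F : ℝ → ℝ, ContinuousOn F I → (∀ t ∉ tsupport φ, F t = 0) →
      IntegrableOn F I := fun F hF h0 =>
    hF.integrableOn_of_support_subset_compact hI.measurableSet hcφ.isCompact hφI
      (support_subset_iff'.mpr h0)
  have hA := hint (fun t => 1 / 2 * deriv u t ^ 2 * (deriv (deriv φ) t + b t * deriv φ t) * w t)
    (by fun_prop) fun t ht => by simp [hφ0 t ht]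
  have hB := hint (fun t => deriv u t * deriv (fun s => deriv (deriv u) s + b s * deriv u s) t
      * φ t * w t) (by fun_prop) fun t ht => by simp [hφ0 t ht]
  have hC := hint (fun t => (deriv (deriv u) t ^ 2 - deriv b t * deriv u t ^ 2) * φ t * w t)
    (by fun_prop) fun t ht => by simp [hφ0 t ht]
  set G : ℝ → ℝ := fun s =>
    (1 / 2 * deriv u s ^ 2 * deriv φ s - deriv u s * deriv (deriv u) s * φ s) * w s
  have hGφ : support G ⊆ tsupport φ := support_subset_iff'.mpr fun t ht => by simp [G, hφ0 t ht]
  have hG : ∀ t ∈ I, HasDerivAt G _ t := fun t ht =>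
    hasDerivAt_bochnerFlux (hu₁.differentiable two_ne_zero t) (hu₂.differentiable one_ne_zero t)
      (hφ.differentiable two_ne_zero t) (hφ₁.differentiable one_ne_zero t)
      ((hb.differentiableOn one_ne_zero).differentiableAt (hI.mem_nhds ht)) (hw t ht)
  have key := setIntegral_eq_zero_of_hasDerivAt_of_tsupport_subset hI hG ((hA.sub hB).sub hC)
    (hcφ.mono' hGφ) ((closure_minimal hGφ (isClosed_tsupport φ)).trans hφI)
  rwa [integral_sub (by exact hA.sub hB) hC, integral_sub hA hB, sub_eq_zero] at key

theorem statement_14_general (I : Set ℝ) (hI : IsOpen I) (N : ℝ)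
    (f : ℝ → ℝ) (hf : ContDiffOn ℝ (⊤ : ℕ∞) f I) (hfpos : ∀ t ∈ I, 0 < f t) :
    ∀ u φ : ℝ → ℝ,
      ContDiff ℝ (⊤ : ℕ∞) u → HasCompactSupport u → tsupport u ⊆ I →
      ContDiff ℝ (⊤ : ℕ∞) φ → HasCompactSupport φ → tsupport φ ⊆ I →
      (∫ t in I, 1 / 2 * deriv u t ^ 2
            * (deriv (deriv φ) t + N * (deriv f t / f t) * deriv φ t) * f t ^ N)
        - (∫ t in I, deriv u t
            * deriv (fun s => deriv (deriv u) s + N * (deriv f s / f s) * deriv u s) t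
            * φ t * f t ^ N)
      = ∫ t in I,
          (deriv (deriv u) t ^ 2
            + N * ((deriv f t / f t) ^ 2 - deriv (deriv f) t / f t) * deriv u t ^ 2)
            * φ t * f t ^ N := by
  intro u φ hu _ _ hφ hcφ hφI
  have hf₁ : ContDiffOn ℝ (⊤ : ℕ∞) (deriv f) I := hf.deriv_of_isOpen hI (by simp)
  have hfd : ∀ t ∈ I, HasDerivAt f (deriv f t) t := fun t ht =>
    ((hf.differentiableOn (by simp)).differentiableAt (hI.mem_nhds ht)).hasDerivAt
  have hf'd : ∀ t ∈ I, HasDerivAt (deriv f) (deriv (deriv f) t) t := fun t ht =>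
    ((hf₁.differentiableOn (by simp)).differentiableAt (hI.mem_nhds ht)).hasDerivAt
  have hb : ContDiffOn ℝ 1 (fun s => N * (deriv f s / f s)) I :=
    contDiffOn_const.mul ((hf₁.of_le (by simp)).div (hf.of_le (by simp))
      fun t ht => (hfpos t ht).ne')
  rw [setIntegral_weighted_bochner hI hb (fun t ht => (hfd t ht).rpow_const_of_pos (hfpos t ht) N)
    (hu.of_le (WithTop.coe_le_coe.mpr le_top)) (hφ.of_le (WithTop.coe_le_coe.mpr le_top)) hcφ hφI]
  refine setIntegral_congr_fun hI.measurableSet fun t ht => ?_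
  have hb' : deriv (fun s => N * (deriv f s / f s)) t
      = N * ((deriv (deriv f) t * f t - deriv f t * deriv f t) / f t ^ 2) :=
    (((hf'd t ht).div (hfd t ht) (hfpos t ht).ne').const_mul N).deriv
  have hft := (hfpos t ht).ne'
  rw [hb']
  field_simp
  ring

/-- One-dimensional weighted Bochner (Γ₂) identity for the weighted Laplacian
`L v = v'' + N (f'/f) v'` on `(I, f^N dt)`:
`∫ ½ (u')² (Lφ) f^N - ∫ u' (Lu)' φ f^N = ∫ ((u'')² + N ((f'/f)² - f''/f)(u')²) φ f^N`. -/
theorem statement_14 (I : Set ℝ) (hI : IsOpen I) (hIconv : Convex ℝ I) (N : ℝ)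
    (f : ℝ → ℝ) (hf : ContDiffOn ℝ (⊤ : ℕ∞) f I) (hfpos : ∀ t ∈ I, 0 < f t) :
    ∀ u φ : ℝ → ℝ,
      ContDiff ℝ (⊤ : ℕ∞) u → HasCompactSupport u → tsupport u ⊆ I →
      ContDiff ℝ (⊤ : ℕ∞) φ → HasCompactSupport φ → tsupport φ ⊆ I →
      (∫ t in I, 1 / 2 * deriv u t ^ 2
            * (deriv (deriv φ) t + N * (deriv f t / f t) * deriv φ t) * f t ^ N)
        - (∫ t in I, deriv u t
            * deriv (fun s => deriv (deriv u) s + N * (deriv f s / f s) * deriv u s) t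
            * φ t * f t ^ N)
      = ∫ t in I,
          (deriv (deriv u) t ^ 2
            + N * ((deriv f t / f t) ^ 2 - deriv (deriv f) t / f t) * deriv u t ^ 2)
            * φ t * f t ^ N :=
  statement_14_general I hI N f hf hfpos
end
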